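/- arXiv:2005.01771 — 4 statements merged into one kernel-verified Lean document; each statement's English description precedes it below -/
import Mathlib

section
/- Let T̄ > 0 and γ > 0. Let A : [0,∞) → ℝ^{n×n} be continuous with A(τ) Metzler for every τ and A(τ) = A(T̄) for all τ ≥ T̄; let E_c : [0,∞) → ℝ^{n×p_c}, C_c : [0,∞) → ℝ^{q_c×n}, F_c : [0,∞) → ℝ^{q_c×p_c} be continuous, entrywise nonnegative, and constant for τ ≥ T̄; let J ≥ 0, E_d ≥ 0, C_d ≥ 0, F_d ≥ 0 be constant matrices; let Φ be the state-transition matrix of A, and for λ ∈ ℝ^n set v(τ) := Φ(τ,0)λ + ∫₀^{τ} Φ(τ,s) E_c(s) 𝟙 ds. Then for any λ > 0 the following are equivalent: (a) A(T̄)v(T̄) + E_c(T̄)𝟙 < 0, C_c(T̄)v(T̄) + F_c(T̄)𝟙 < γ𝟙, J v(θ) − λ + E_d𝟙 < 0 for all θ ≥ T̄, C_c(τ)v(τ) + F_c(τ)𝟙 < γ𝟙 for all τ ≥ 0, and C_d v(θ) + F_d𝟙 < γ𝟙 for all θ ≥ T̄; (b) A(T̄)v(T̄) + E_c(T̄)𝟙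 < 0, C_c(T̄)v(T̄) + F_c(T̄)𝟙 < γ𝟙, J v(T̄) − λ + E_d𝟙 < 0, C_c(τ)v(τ) + F_c(τ)𝟙 < γ𝟙 for all τ ∈ [0,T̄], and C_d v(T̄) + F_d𝟙 < γ𝟙. -/
/-!
Past `T̄` the system is time-invariant, so uniqueness for linear ODEs gives
`Φ(θ, s) = exp((θ - s) A(T̄))` for `T̄ ≤ s ≤ θ` and `Φ(θ, s) = Φ(θ, T̄) Φ(T̄, s)` for `s ≤ T̄`;
hence `v(θ) - v(T̄) = ∫₀^{θ-T̄} exp(r A(T̄)) (A(T̄) v(T̄) + E_c(T̄) 𝟙) dr` for `θ ≥ T̄`.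
A Metzler matrix becomes nonnegative after adding a multiple of the identity, so `exp(r A(T̄)) ≥ 0`
for `r ≥ 0`, and the first condition makes `v` entrywise non-increasing on `[T̄, ∞)`. As `J`,
`C_c(T̄)` and `C_d` are nonnegative, the conditions at `T̄` then hold at every `θ ≥ T̄`.

Splitting the integral at `T̄` needs `s ↦ Φ(T̄, s)` to be continuous; Grönwall's bound makes it
Lipschitz.
-/

open Matrix Set intervalIntegral

/-- A square real matrix is Metzler if all its off-diagonal entries are nonnegative. -/
def Metzler {n : ℕ} (A : Matrix (Fin n) (Fin n) ℝ) : Prop :=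
  ∀ i j, i ≠ j → 0 ≤ A i j

open NormedSpace NNReal MeasureTheory

theorem intervalIntegral.integral_pi_apply {ι : Type*} [Fintype ι] {f : ℝ → ι → ℝ} {a b : ℝ}
    (hf : IntervalIntegrable f volume a b) (i : ι) :
    (∫ x in a..b, f x) i = ∫ x in a..b, f x i :=
  ((ContinuousLinearMap.proj (R := ℝ) (φ := fun _ : ι => ℝ) i).intervalIntegral_comp_comm hf).symm

namespace Matrix

variable {l m : Type*} [Fintype m]

theorem mulVec_le_mulVec_of_nonneg {Q : Matrix l m ℝ} (hQ : ∀ i j, 0 ≤ Q i j) {y z : m → ℝ}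
    (h : y ≤ z) : Q *ᵥ y ≤ Q *ᵥ z := fun i =>
  Finset.sum_le_sum fun j _ => mul_le_mul_of_nonneg_left (h j) (hQ i j)

theorem mulVec_intervalIntegral [Fintype l] (M : Matrix l m ℝ) {f : ℝ → m → ℝ} {a b : ℝ}
    (hf : IntervalIntegrable f volume a b) :
    M *ᵥ ∫ x in a..b, f x = ∫ x in a..b, M *ᵥ f x :=
  ((mulVecLin M).toContinuousLinearMap.intervalIntegral_comp_comm hf).symm

theorem lipschitzWith_mulVec [Fintype l] {B : Matrix l m ℝ} {K : ℝ≥0}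
    (hB : ∀ x, ‖B *ᵥ x‖ ≤ K * ‖x‖) : LipschitzWith K (B *ᵥ ·) :=
  LipschitzWith.of_dist_le_mul fun x y => by
    rw [dist_eq_norm, dist_eq_norm, ← mulVec_sub]; exact hB _

theorem exists_norm_mulVec_le_of_continuousOn [Fintype l] {B : ℝ → Matrix l m ℝ} {s : Set ℝ}
    (hs : IsCompact s) (hB : ContinuousOn B s) :
    ∃ K : ℝ≥0, ∀ t ∈ s, ∀ x, ‖B t *ᵥ x‖ ≤ K * ‖x‖ := by
  let := Matrix.linftyOpNormedAddCommGroup (m := l) (n := m) (α := ℝ)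
  obtain ⟨C, hC⟩ := hs.exists_bound_of_continuousOn hB
  exact ⟨C.toNNReal, fun t ht x => (linfty_opNorm_mulVec _ _).trans <|
    mul_le_mul_of_nonneg_right ((hC t ht).trans (Real.le_coe_toNNReal C)) (norm_nonneg _)⟩

variable [DecidableEq m]

theorem exp_apply_nonneg {N : Matrix m m ℝ} (hN : ∀ i j, 0 ≤ N i j) (i j : m) :
    0 ≤ exp N i j := by
  -- `exp` needs no norm, but the normed-algebra API does; any matrix norm will do.
  let := Matrix.linftyOpNormedRing (n := m) (α := ℝ)
  let := Matrix.linftyOpNormedAlgebra (R := ℝ) (n := m) (α := ℝ)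
  have hs : Summable fun k : ℕ => (k.factorial : ℝ)⁻¹ • N ^ k := expSeries_summable' N
  rw [congrFun (exp_eq_tsum ℝ) N]
  exact (Pi.hasSum.1 (Pi.hasSum.1 hs.hasSum i) j).nonneg fun k =>
    mul_nonneg (by positivity) (pow_apply_nonneg hN k i j)

theorem exp_smul_mulVec_mulVec_comm (M : Matrix m m ℝ) (r : ℝ) (x : m → ℝ) :
    exp (r • M) *ᵥ (M *ᵥ x) = M *ᵥ (exp (r • M) *ᵥ x) := by
  rw [mulVec_mulVec, mulVec_mulVec, ((Commute.refl M).smul_left r).exp_left.eq]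

theorem hasDerivAt_exp_smul_mulVec (M : Matrix m m ℝ) (x : m → ℝ) (r : ℝ) :
    HasDerivAt (fun r : ℝ => exp (r • M) *ᵥ x) (M *ᵥ (exp (r • M) *ᵥ x)) r := by
  let := Matrix.linftyOpNormedRing (n := m) (α := ℝ)
  let := Matrix.linftyOpNormedAlgebra (R := ℝ) (n := m) (α := ℝ)
  rw [mulVec_mulVec]
  exact (LinearMap.toContinuousLinearMap ((mulVecBilin ℝ ℝ).flip x)).hasFDerivAt.comp_hasDerivAt
    r (hasDerivAt_exp_smul_const' M r)

theorem continuous_exp_smul_mulVec (M : Matrix m m ℝ) (x : m → ℝ) :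
    Continuous fun r : ℝ => exp (r • M) *ᵥ x :=
  continuous_iff_continuousAt.2 fun r => (hasDerivAt_exp_smul_mulVec M x r).continuousAt

theorem integral_exp_smul_mulVec_mulVec (M : Matrix m m ℝ) (x : m → ℝ) (a b : ℝ) :
    ∫ r in a..b, exp (r • M) *ᵥ (M *ᵥ x) = exp (b • M) *ᵥ x - exp (a • M) *ᵥ x :=
  integral_eq_sub_of_hasDerivAt
    (fun r _ => exp_smul_mulVec_mulVec_comm M r x ▸ hasDerivAt_exp_smul_mulVec M x r)
    ((continuous_exp_smul_mulVec M _).intervalIntegrable a b)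

end Matrix

theorem eqOn_of_hasDerivWithinAt_mulVec {m : Type*} [Fintype m] {B : ℝ → Matrix m m ℝ} {a b : ℝ}
    {f g : ℝ → m → ℝ} (hB : ContinuousOn B (Icc a b))
    (hf : ContinuousOn f (Icc a b)) (hf' : ∀ t ∈ Ico a b, HasDerivWithinAt f (B t *ᵥ f t) (Ici t) t)
    (hg : ContinuousOn g (Icc a b)) (hg' : ∀ t ∈ Ico a b, HasDerivWithinAt g (B t *ᵥ g t) (Ici t) t)
    (ha : f a = g a) : EqOn f g (Icc a b) := by
  obtain ⟨K, hK⟩ := Matrix.exists_norm_mulVec_le_of_continuousOn isCompact_Icc hB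
  exact ODE_solution_unique_of_mem_Icc_right (v := fun t x => B t *ᵥ x) (s := fun _ => univ)
    (fun t ht => (Matrix.lipschitzWith_mulVec (hK t (Ico_subset_Icc_self ht))).lipschitzOnWith)
    hf hf' (fun _ _ => trivial) hg hg' (fun _ _ => trivial) ha

section

variable {n : ℕ}

theorem Metzler.exp_smul_apply_nonneg {M : Matrix (Fin n) (Fin n) ℝ} (hM : Metzler M) {r : ℝ}
    (hr : 0 ≤ r) (i j : Fin n) : 0 ≤ exp (r • M) i j := by
  obtain ⟨c, hc⟩ := (Set.finite_range fun i => -M i i).bddAbove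
  set N := r • (M + algebraMap ℝ _ c)
  have hN : ∀ i j, 0 ≤ N i j := fun i j => by
    refine mul_nonneg hr ?_
    rcases eq_or_ne i j with rfl | hij
    · simpa [algebraMap_eq_diagonal, neg_le_iff_add_nonneg'] using hc (mem_range_self i)
    · simpa [algebraMap_eq_diagonal, hij] using hM i j hij
  have hsplit : r • M = N + algebraMap ℝ _ (-(r * c)) := by
    simp only [N, Algebra.algebraMap_eq_smul_one]
    module
  rw [hsplit, Matrix.exp_add_of_commute _ _ (Algebra.commute_algebraMap_right _ _)]
  have hscalar : exp (algebraMap ℝ (Matrix (Fin n) (Fin n) ℝ) (-(r * c)))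
      = algebraMap ℝ _ (Real.exp (-(r * c))) := by
    let := Matrix.linftyOpNormedRing (n := Fin n) (α := ℝ)
    let := Matrix.linftyOpNormedAlgebra (R := ℝ) (n := Fin n) (α := ℝ)
    rw [Real.exp_eq_exp_ℝ]; exact (algebraMap_exp_comm _).symm
  rw [hscalar, ← Algebra.commutes, ← Algebra.smul_def, Matrix.smul_apply, smul_eq_mul]
  exact mul_nonneg (Real.exp_pos _).le (exp_apply_nonneg hN i j)

theorem Metzler.exp_smul_mulVec_add_integral_le {M : Matrix (Fin n) (Fin n) ℝ} (hM : Metzler M)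
    {w e : Fin n → ℝ} (hw : M *ᵥ w + e ≤ 0) {u : ℝ} (hu : 0 ≤ u) :
    exp (u • M) *ᵥ w + (∫ r in 0..u, exp (r • M) *ᵥ e) ≤ w := by
  have hint : ∀ x : Fin n → ℝ, IntervalIntegrable (fun r : ℝ => exp (r • M) *ᵥ x)
      volume 0 u := fun x => (continuous_exp_smul_mulVec M x).intervalIntegrable 0 u
  have hdiff : exp (u • M) *ᵥ w + (∫ r in 0..u, exp (r • M) *ᵥ e) - w
      = ∫ r in 0..u, exp (r • M) *ᵥ (M *ᵥ w + e) := by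
    simp only [mulVec_add]
    rw [integral_add (hint _) (hint _), integral_exp_smul_mulVec_mulVec, zero_smul, exp_zero,
      one_mulVec]
    abel
  rw [← sub_nonpos, hdiff]
  intro i
  rw [Pi.zero_apply, integral_pi_apply (hint _), ← neg_nonneg, ← intervalIntegral.integral_neg]
  exact integral_nonneg hu fun r hr => neg_nonneg.2 <| by
    simpa using mulVec_le_mulVec_of_nonneg (hM.exp_smul_apply_nonneg hr.1) hw i

structure IsStateTransition (A : ℝ → Matrix (Fin n) (Fin n) ℝ)
    (Φ : ℝ → ℝ → Matrix (Fin n) (Fin n) ℝ) : Prop where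
  apply_self : ∀ s, 0 ≤ s → Φ s s = 1
  hasDerivWithinAt_apply : ∀ s, 0 ≤ s → ∀ τ, s ≤ τ → ∀ i j,
    HasDerivWithinAt (fun u => Φ u s i j) ((A τ * Φ τ s) i j) (Ici s) τ

noncomputable def duhamel (Φ : ℝ → ℝ → Matrix (Fin n) (Fin n) ℝ) (x : Fin n → ℝ)
    (g : ℝ → Fin n → ℝ) (τ : ℝ) : Fin n → ℝ :=
  Φ τ 0 *ᵥ x + ∫ s in 0..τ, Φ τ s *ᵥ g s

namespace IsStateTransition

variable {A : ℝ → Matrix (Fin n) (Fin n) ℝ} {Φ : ℝ → ℝ → Matrix (Fin n) (Fin n) ℝ}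
  (hΦ : IsStateTransition A Φ) {r s t : ℝ}
include hΦ

theorem hasDerivWithinAt_mulVec (hs : 0 ≤ s) (hst : s ≤ t) (x : Fin n → ℝ) :
    HasDerivWithinAt (fun u => Φ u s *ᵥ x) (A t *ᵥ (Φ t s *ᵥ x)) (Ici s) t := by
  rw [mulVec_mulVec]
  exact hasDerivWithinAt_pi.2 fun i => HasDerivWithinAt.fun_sum (u := Finset.univ) fun j _ =>
    (hΦ.hasDerivWithinAt_apply s hs t hst i j).mul_const (x j)

theorem continuousOn_mulVec (hs : 0 ≤ s) (x : Fin n → ℝ) :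
    ContinuousOn (fun u => Φ u s *ᵥ x) (Ici s) := fun _ ht =>
  (hΦ.hasDerivWithinAt_mulVec hs ht x).continuousWithinAt

theorem eqOn_mulVec (hA : Continuous A) (hs : 0 ≤ s) {f : ℝ → Fin n → ℝ}
    (hf : ContinuousOn f (Icc s t))
    (hf' : ∀ u ∈ Ico s t, HasDerivWithinAt f (A u *ᵥ f u) (Ici u) u) :
    EqOn f (fun u => Φ u s *ᵥ f s) (Icc s t) :=
  eqOn_of_hasDerivWithinAt_mulVec hA.continuousOn hf hf'
    ((hΦ.continuousOn_mulVec hs _).mono Icc_subset_Ici_self)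
    (fun u hu => (hΦ.hasDerivWithinAt_mulVec hs hu.1 _).mono (Ici_subset_Ici.2 hu.1))
    (by rw [hΦ.apply_self s hs, one_mulVec])

theorem mul_of_le (hA : Continuous A) (hs : 0 ≤ s) (hsr : s ≤ r) (hrt : r ≤ t) :
    Φ t r * Φ r s = Φ t s := by
  refine ext_of_mulVec_single fun j => ?_
  rw [← mulVec_mulVec]
  exact (hΦ.eqOn_mulVec hA (hs.trans hsr) ((hΦ.continuousOn_mulVec hs _).mono
    fun u hu => hsr.trans hu.1) (fun u hu => (hΦ.hasDerivWithinAt_mulVec hs (hsr.trans hu.1) _).mono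
      (Ici_subset_Ici.2 (hsr.trans hu.1))) ⟨hrt, le_rfl⟩).symm

theorem eq_exp_of_eq_const (hA : Continuous A) {M : Matrix (Fin n) (Fin n) ℝ}
    (hAM : ∀ u, r ≤ u → A u = M) (hr : 0 ≤ r) (hrs : r ≤ s) (hst : s ≤ t) :
    Φ t s = exp ((t - s) • M) := by
  refine ext_of_mulVec_single fun j => ?_
  have hderiv : ∀ u, HasDerivAt (fun u => exp ((u - s) • M) *ᵥ Pi.single j 1)
      (M *ᵥ (exp ((u - s) • M) *ᵥ Pi.single j 1)) u := fun u =>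
    (hasDerivAt_exp_smul_mulVec M _ (u - s)).comp_sub_const u s
  have := hΦ.eqOn_mulVec hA (hr.trans hrs) (f := fun u => exp ((u - s) • M) *ᵥ Pi.single j 1)
    (continuous_iff_continuousAt.2 fun u => (hderiv u).continuousAt).continuousOn
    (fun u hu => by
      rw [hAM u (hrs.trans hu.1)]; exact (hderiv u).hasDerivWithinAt) ⟨hst, le_rfl⟩
  simpa only [sub_self, zero_smul, exp_zero, one_mulVec] using this.symm

theorem norm_mulVec_le {K : ℝ≥0} (hK : ∀ u ∈ Icc s t, ∀ x, ‖A u *ᵥ x‖ ≤ K * ‖x‖) (hs : 0 ≤ s)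
    (hst : s ≤ t) (x : Fin n → ℝ) : ‖Φ t s *ᵥ x‖ ≤ ‖x‖ * Real.exp (K * (t - s)) := by
  have := norm_le_gronwallBound_of_norm_deriv_right_le (f := fun u => Φ u s *ᵥ x) (ε := 0)
    ((hΦ.continuousOn_mulVec hs x).mono Icc_subset_Ici_self)
    (fun u hu => (hΦ.hasDerivWithinAt_mulVec hs hu.1 x).mono (Ici_subset_Ici.2 hu.1))
    (by rw [hΦ.apply_self s hs, one_mulVec])
    (fun u hu => by rw [add_zero]; exact hK u (Ico_subset_Icc_self hu) _) t ⟨hst, le_rfl⟩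
  rwa [gronwallBound_ε0] at this

theorem norm_mulVec_sub_le {K : ℝ≥0} (hK : ∀ u ∈ Icc s t, ∀ x, ‖A u *ᵥ x‖ ≤ K * ‖x‖)
    (hs : 0 ≤ s) (hst : s ≤ t) (x : Fin n → ℝ) :
    ‖Φ t s *ᵥ x - x‖ ≤ K * ‖x‖ * Real.exp (K * (t - s)) * (t - s) := by
  have := norm_image_sub_le_of_norm_deriv_right_le_segment (f := fun u => Φ u s *ᵥ x)
    ((hΦ.continuousOn_mulVec hs x).mono Icc_subset_Ici_self)
    (fun u hu => (hΦ.hasDerivWithinAt_mulVec hs hu.1 x).mono (Ici_subset_Ici.2 hu.1))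
    (fun u hu => calc
      ‖A u *ᵥ (Φ u s *ᵥ x)‖ ≤ K * ‖Φ u s *ᵥ x‖ := hK u (Ico_subset_Icc_self hu) _
      _ ≤ K * (‖x‖ * Real.exp (K * (u - s))) := by
        gcongr
        exact hΦ.norm_mulVec_le (fun v hv => hK v ⟨hv.1, hv.2.trans hu.2.le⟩) hs hu.1 x
      _ ≤ K * ‖x‖ * Real.exp (K * (t - s)) := by
        rw [← mul_assoc]; gcongr; exact hu.2.le)
    t ⟨hst, le_rfl⟩
  rwa [hΦ.apply_self s hs, one_mulVec] at this

theorem continuousOn_mulVec_right (hA : Continuous A) (x : Fin n → ℝ) :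
    ContinuousOn (fun s => Φ t s *ᵥ x) (Icc 0 t) := by
  obtain ⟨K, hK⟩ :=
    exists_norm_mulVec_le_of_continuousOn isCompact_Icc (hA.continuousOn (s := Icc 0 t))
  refine (LipschitzOnWith.of_dist_le' (K := K * ‖x‖ * Real.exp (K * t))
    fun s hs s' hs' => ?_).continuousOn
  wlog hss : s ≤ s' generalizing s s'
  · rw [dist_comm, dist_comm s]; exact this s' hs' s hs (le_of_not_ge hss)
  have hK' : ∀ {a b}, 0 ≤ a → b ≤ t → ∀ u ∈ Icc a b, ∀ x, ‖A u *ᵥ x‖ ≤ K * ‖x‖ :=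
    fun ha hb u hu => hK u ⟨ha.trans hu.1, hu.2.trans hb⟩
  rw [dist_eq_norm, ← hΦ.mul_of_le hA hs.1 hss hs'.2, ← mulVec_mulVec, ← mulVec_sub,
    Real.dist_eq, abs_of_nonpos (sub_nonpos.2 hss), neg_sub]
  calc ‖Φ t s' *ᵥ (Φ s' s *ᵥ x - x)‖ ≤ ‖Φ s' s *ᵥ x - x‖ * Real.exp (K * (t - s')) :=
        hΦ.norm_mulVec_le (hK' hs'.1 le_rfl) hs'.1 hs'.2 _
    _ ≤ K * ‖x‖ * Real.exp (K * (s' - s)) * (s' - s) * Real.exp (K * (t - s')) := by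
        gcongr; exact hΦ.norm_mulVec_sub_le (hK' hs.1 hs'.2) hs.1 hss x
    _ = K * ‖x‖ * Real.exp (K * (t - s)) * (s' - s) := by
        rw [show t - s = (s' - s) + (t - s') by ring, mul_add, Real.exp_add]; ring
    _ ≤ K * ‖x‖ * Real.exp (K * t) * (s' - s) := by
        gcongr; linarith [hs.1]

theorem continuousOn_mulVec_apply (hA : Continuous A) {g : ℝ → Fin n → ℝ}
    (hg : ContinuousOn g (Icc 0 t)) : ContinuousOn (fun s => Φ t s *ᵥ g s) (Icc 0 t) := by
  have hΦt : ContinuousOn (Φ t) (Icc 0 t) :=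
    continuousOn_pi.2 fun i => continuousOn_pi.2 fun j => by
      simpa [Function.comp_def, mulVec_single_one] using
        (continuous_apply i).comp_continuousOn (hΦ.continuousOn_mulVec_right hA (Pi.single j 1))
  rw [continuousOn_iff_continuous_domRestrict] at hΦt hg ⊢
  exact hΦt.matrix_mulVec hg

section Duhamel

variable (hA : Continuous A) {g : ℝ → Fin n → ℝ} (hg : Continuous g)
include hA hg

theorem duhamel_eq_mulVec_add_integral (hr : 0 ≤ r) (hrt : r ≤ t) (x : Fin n → ℝ) :
    duhamel Φ x g t = Φ t r *ᵥ duhamel Φ x g r + ∫ s in r..t, Φ t s *ᵥ g s := by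
  have hcont := hΦ.continuousOn_mulVec_apply (t := t) hA hg.continuousOn
  have hint₁ : IntervalIntegrable (fun s => Φ t s *ᵥ g s) volume 0 r :=
    (hcont.mono (Icc_subset_Icc_right hrt)).intervalIntegrable_of_Icc hr
  have hint₂ : IntervalIntegrable (fun s => Φ t s *ᵥ g s) volume r t :=
    (hcont.mono (Icc_subset_Icc_left hr)).intervalIntegrable_of_Icc hrt
  have hcocycle : ∫ s in 0..r, Φ t s *ᵥ g s = Φ t r *ᵥ ∫ s in 0..r, Φ r s *ᵥ g s := by
    rw [mulVec_intervalIntegral _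
      ((hΦ.continuousOn_mulVec_apply hA hg.continuousOn).intervalIntegrable_of_Icc hr)]
    refine integral_congr fun s hs => ?_
    rw [uIcc_of_le hr] at hs
    simp only [mulVec_mulVec, hΦ.mul_of_le hA hs.1 hs.2 hrt]
  rw [duhamel, duhamel, ← integral_add_adjacent_intervals hint₁ hint₂, hcocycle, mulVec_add,
    mulVec_mulVec, hΦ.mul_of_le hA le_rfl hr hrt, add_assoc]

variable {M : Matrix (Fin n) (Fin n) ℝ} {e : Fin n → ℝ} (hAM : ∀ u, r ≤ u → A u = M)
  (hge : ∀ u, r ≤ u → g u = e)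
include hAM hge

theorem duhamel_eq_exp_of_eq_const (hr : 0 ≤ r) (hrt : r ≤ t) (x : Fin n → ℝ) :
    duhamel Φ x g t =
      exp ((t - r) • M) *ᵥ duhamel Φ x g r + ∫ u in 0..t - r, exp (u • M) *ᵥ e := by
  rw [hΦ.duhamel_eq_mulVec_add_integral hA hg hr hrt, hΦ.eq_exp_of_eq_const hA hAM hr le_rfl hrt]
  congr 1
  rw [← sub_self t, ← integral_comp_sub_left (fun u => exp (u • M) *ᵥ e) t]
  refine integral_congr fun s hs => ?_
  rw [uIcc_of_le hrt] at hs
  simp only [hge s hs.1, hΦ.eq_exp_of_eq_const hA hAM hr hs.1 hs.2]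

theorem duhamel_le_of_eq_const (hM : Metzler M) (hr : 0 ≤ r) (x : Fin n → ℝ)
    (hneg : M *ᵥ duhamel Φ x g r + e ≤ 0) (hrt : r ≤ t) :
    duhamel Φ x g t ≤ duhamel Φ x g r := by
  rw [hΦ.duhamel_eq_exp_of_eq_const hA hg hAM hge hr hrt]
  exact hM.exp_smul_mulVec_add_integral_le hneg (sub_nonneg.2 hrt)

end Duhamel

end IsStateTransition

end

theorem min_dwell_time_discrete_conditions_iff_general {n pc qc qd pd : ℕ}
    (Tb γ : ℝ) (hTb : 0 < Tb)
    (At : ℝ → Matrix (Fin n) (Fin n) ℝ) (Ec : ℝ → Matrix (Fin n) (Fin pc) ℝ)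
    (Cc : ℝ → Matrix (Fin qc) (Fin n) ℝ) (Fc : ℝ → Matrix (Fin qc) (Fin pc) ℝ)
    (J : Matrix (Fin n) (Fin n) ℝ) (Ed : Matrix (Fin n) (Fin pd) ℝ)
    (Cd : Matrix (Fin qd) (Fin n) ℝ) (Fd : Matrix (Fin qd) (Fin pd) ℝ)
    (hA : Continuous At) (hEc : Continuous Ec)
    (hAM : ∀ τ : ℝ, Metzler (At τ))
    (hAc : ∀ τ : ℝ, Tb ≤ τ → At τ = At Tb)
    (hEcc : ∀ τ : ℝ, Tb ≤ τ → Ec τ = Ec Tb)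
    (hCcc : ∀ τ : ℝ, Tb ≤ τ → Cc τ = Cc Tb)
    (hFcc : ∀ τ : ℝ, Tb ≤ τ → Fc τ = Fc Tb)
    (hCcp : ∀ τ : ℝ, ∀ i j, 0 ≤ Cc τ i j)
    (hJp : ∀ i j, 0 ≤ J i j)
    (hCdp : ∀ i j, 0 ≤ Cd i j)
    -- `Φ` is the state-transition matrix of `A` on `[0, ∞)`
    (Φ : ℝ → ℝ → Matrix (Fin n) (Fin n) ℝ)
    (hΦ0 : ∀ s : ℝ, 0 ≤ s → Φ s s = 1)
    (hΦ : ∀ s : ℝ, 0 ≤ s → ∀ τ : ℝ, s ≤ τ → ∀ i j,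
      HasDerivWithinAt (fun u => Φ u s i j) ((At τ * Φ τ s) i j) (Set.Ici s) τ)
    (lam : Fin n → ℝ)
    -- `v τ = Φ(τ,0)λ + ∫₀^τ Φ(τ,s)E_c(s)𝟙 ds`
    (v : ℝ → Fin n → ℝ)
    (hv : ∀ τ : ℝ, v τ = Φ τ 0 *ᵥ lam + ∫ s in (0:ℝ)..τ, Φ τ s *ᵥ (Ec s *ᵥ fun _ => (1:ℝ))) :
    ((∀ i, (At Tb *ᵥ v Tb + Ec Tb *ᵥ (fun _ => (1:ℝ))) i < 0) ∧
     (∀ i, (Cc Tb *ᵥ v Tb + Fc Tb *ᵥ (fun _ => (1:ℝ))) i < γ) ∧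
     (∀ θ : ℝ, Tb ≤ θ → ∀ i, (J *ᵥ v θ - lam + Ed *ᵥ (fun _ => (1:ℝ))) i < 0) ∧
     (∀ τ : ℝ, 0 ≤ τ → ∀ i, (Cc τ *ᵥ v τ + Fc τ *ᵥ (fun _ => (1:ℝ))) i < γ) ∧
     (∀ θ : ℝ, Tb ≤ θ → ∀ i, (Cd *ᵥ v θ + Fd *ᵥ (fun _ => (1:ℝ))) i < γ))
    ↔
    ((∀ i, (At Tb *ᵥ v Tb + Ec Tb *ᵥ (fun _ => (1:ℝ))) i < 0) ∧
     (∀ i, (Cc Tb *ᵥ v Tb + Fc Tb *ᵥ (fun _ => (1:ℝ))) i < γ) ∧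
     (∀ i, (J *ᵥ v Tb - lam + Ed *ᵥ (fun _ => (1:ℝ))) i < 0) ∧
     (∀ τ ∈ Set.Icc (0:ℝ) Tb, ∀ i, (Cc τ *ᵥ v τ + Fc τ *ᵥ (fun _ => (1:ℝ))) i < γ) ∧
     (∀ i, (Cd *ᵥ v Tb + Fd *ᵥ (fun _ => (1:ℝ))) i < γ)) := by
  have hv' : v = duhamel Φ lam fun s => Ec s *ᵥ fun _ => 1 := funext hv
  constructor
  · rintro ⟨hAv, hCcv_Tb, hJv, hCcv, hCdv⟩
    exact ⟨hAv, hCcv_Tb, hJv Tb le_rfl, fun τ hτ => hCcv τ hτ.1, hCdv Tb le_rfl⟩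
  · rintro ⟨hAv, hCcv_Tb, hJv, hCcv, hCdv⟩
    have hle : ∀ θ, Tb ≤ θ → v θ ≤ v Tb := by
      subst hv'
      exact fun θ hθ => IsStateTransition.duhamel_le_of_eq_const ⟨hΦ0, hΦ⟩ hA
        (hEc.matrix_mulVec continuous_const) hAc (fun u hu => by rw [hEcc u hu]) (hAM Tb) hTb.le
        lam (fun i => (hAv i).le) hθ
    refine ⟨hAv, hCcv_Tb, fun θ hθ i => ?_, fun τ hτ i => ?_, fun θ hθ i => ?_⟩
    · exact (add_le_add (sub_le_sub_right
        (mulVec_le_mulVec_of_nonneg hJp (hle θ hθ) i) _) le_rfl).trans_lt (hJv i)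
    · rcases le_total τ Tb with hτTb | hTbτ
      · exact hCcv τ ⟨hτ, hτTb⟩ i
      · rw [hCcc τ hTbτ, hFcc τ hTbτ]
        exact (add_le_add (mulVec_le_mulVec_of_nonneg (hCcp Tb) (hle τ hTbτ) i)
          le_rfl).trans_lt (hCcv_Tb i)
    · exact (add_le_add (mulVec_le_mulVec_of_nonneg hCdp (hle θ hθ) i) le_rfl).trans_lt (hCdv i)

/-- Under minimum dwell-time, the semi-infinite discrete-time conditions (for all `θ ≥ T̄`)
are equivalent to the finite ones (at `θ = T̄` and `τ ∈ [0, T̄]`). -/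
theorem min_dwell_time_discrete_conditions_iff {n pc qc qd pd : ℕ}
    (Tb γ : ℝ) (hTb : 0 < Tb) (hγ : 0 < γ)
    (At : ℝ → Matrix (Fin n) (Fin n) ℝ) (Ec : ℝ → Matrix (Fin n) (Fin pc) ℝ)
    (Cc : ℝ → Matrix (Fin qc) (Fin n) ℝ) (Fc : ℝ → Matrix (Fin qc) (Fin pc) ℝ)
    (J : Matrix (Fin n) (Fin n) ℝ) (Ed : Matrix (Fin n) (Fin pd) ℝ)
    (Cd : Matrix (Fin qd) (Fin n) ℝ) (Fd : Matrix (Fin qd) (Fin pd) ℝ)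
    (hA : Continuous At) (hEc : Continuous Ec) (hCc : Continuous Cc) (hFc : Continuous Fc)
    (hAM : ∀ τ : ℝ, Metzler (At τ))
    (hAc : ∀ τ : ℝ, Tb ≤ τ → At τ = At Tb)
    (hEcc : ∀ τ : ℝ, Tb ≤ τ → Ec τ = Ec Tb)
    (hCcc : ∀ τ : ℝ, Tb ≤ τ → Cc τ = Cc Tb)
    (hFcc : ∀ τ : ℝ, Tb ≤ τ → Fc τ = Fc Tb)
    (hEcp : ∀ τ : ℝ, ∀ i j, 0 ≤ Ec τ i j)
    (hCcp : ∀ τ : ℝ, ∀ i j, 0 ≤ Cc τ i j)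
    (hFcp : ∀ τ : ℝ, ∀ i j, 0 ≤ Fc τ i j)
    (hJp : ∀ i j, 0 ≤ J i j) (hEdp : ∀ i j, 0 ≤ Ed i j)
    (hCdp : ∀ i j, 0 ≤ Cd i j) (hFdp : ∀ i j, 0 ≤ Fd i j)
    -- `Φ` is the state-transition matrix of `A` on `[0, ∞)`
    (Φ : ℝ → ℝ → Matrix (Fin n) (Fin n) ℝ)
    (hΦ0 : ∀ s : ℝ, 0 ≤ s → Φ s s = 1)
    (hΦ : ∀ s : ℝ, 0 ≤ s → ∀ τ : ℝ, s ≤ τ → ∀ i j,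
      HasDerivWithinAt (fun u => Φ u s i j) ((At τ * Φ τ s) i j) (Set.Ici s) τ)
    (lam : Fin n → ℝ) (hlam : ∀ i, 0 < lam i)
    -- `v τ = Φ(τ,0)λ + ∫₀^τ Φ(τ,s)E_c(s)𝟙 ds`
    (v : ℝ → Fin n → ℝ)
    (hv : ∀ τ : ℝ, v τ = Φ τ 0 *ᵥ lam + ∫ s in (0:ℝ)..τ, Φ τ s *ᵥ (Ec s *ᵥ fun _ => (1:ℝ))) :
    ((∀ i, (At Tb *ᵥ v Tb + Ec Tb *ᵥ (fun _ => (1:ℝ))) i < 0) ∧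
     (∀ i, (Cc Tb *ᵥ v Tb + Fc Tb *ᵥ (fun _ => (1:ℝ))) i < γ) ∧
     (∀ θ : ℝ, Tb ≤ θ → ∀ i, (J *ᵥ v θ - lam + Ed *ᵥ (fun _ => (1:ℝ))) i < 0) ∧
     (∀ τ : ℝ, 0 ≤ τ → ∀ i, (Cc τ *ᵥ v τ + Fc τ *ᵥ (fun _ => (1:ℝ))) i < γ) ∧
     (∀ θ : ℝ, Tb ≤ θ → ∀ i, (Cd *ᵥ v θ + Fd *ᵥ (fun _ => (1:ℝ))) i < γ))
    ↔
    ((∀ i, (At Tb *ᵥ v Tb + Ec Tb *ᵥ (fun _ => (1:ℝ))) i < 0) ∧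
     (∀ i, (Cc Tb *ᵥ v Tb + Fc Tb *ᵥ (fun _ => (1:ℝ))) i < γ) ∧
     (∀ i, (J *ᵥ v Tb - lam + Ed *ᵥ (fun _ => (1:ℝ))) i < 0) ∧
     (∀ τ ∈ Set.Icc (0:ℝ) Tb, ∀ i, (Cc τ *ᵥ v τ + Fc τ *ᵥ (fun _ => (1:ℝ))) i < γ) ∧
     (∀ i, (Cd *ᵥ v Tb + Fd *ᵥ (fun _ => (1:ℝ))) i < γ)) :=
  min_dwell_time_discrete_conditions_iff_general Tb γ hTb At Ec Cc Fc J Ed Cd Fd hA hEc hAM hAc hEcc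
    hCcc hFcc hCcp hJp hCdp Φ hΦ0 hΦ lam v hv
end

section
/- Let A ∈ ℝ^{n×n} be Metzler and let E_c, C_c, F_c, J, E_d, C_d, F_d be constant entrywise nonnegative matrices of compatible dimensions. Suppose there exist a vector λ ∈ ℝ^n with λ > 0 and a scalar γ > 0 such that Aλ + E_c𝟙 < 0, C_cλ + F_c𝟙 − γ𝟙 < 0, (J − I)λ + E_d𝟙 < 0, and C_dλ + F_d𝟙 − γ𝟙 < 0. Then for every impulse time sequence, the linear impulsive system with constant matrices ẋ = Ax + E_c w_c on flow intervals, jumps x(t_k⁺) = J x(t_k) + E_d w_d(k), and outputs z_c(t) = C_c x(t) + F_c w_c(t), z_d(k) = C_d x(t_k) + F_d w_d(k) satisfies: (i) there exist M > 0, α > 0 and ρ ∈ (0,1) such that every trajectory with w_c ≡ 0, w_d ≡ 0 satisfies ‖x(t)‖_∞ ≤ M ρ^{κ(t,t_0)} e^{−α(t−t_0)} ‖x(t_0)‖_∞ for all t ≥ t_0; and (ii) every trajectory with x(t_0) = 0 and inputs satisfying 0 ≤ w_c(t) ≤ 𝟙 and 0 ≤ w_d(k) ≤ 𝟙 satisfies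 z_c(t) ≤ γ𝟙 for all t ≥ t_0 and z_d(k) ≤ γ𝟙 for all k ≥ 1. -/
open Matrix Filter Set Topology

/-- An impulse time sequence: `t 0` is the initial time `t₀`, the `t k` for `k ≥ 1` are the
impulse times; the sequence is strictly increasing and tends to infinity. -/
structure ImpulseSeq where
  t : ℕ → ℝ
  t0_nonneg : 0 ≤ t 0
  mono : StrictMono t
  tendsto_atTop : Filter.Tendsto t Filter.atTop Filter.atTop

/-- `κ(t,s)`: the number of impulse instants `t_k`, `k ≥ 1`, with `s ≤ t_k < t`. -/
noncomputable def ImpulseSeq.kappa (σ : ImpulseSeq) (s u : ℝ) : ℕ :=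
  Set.ncard {k : ℕ | 1 ≤ k ∧ s ≤ σ.t k ∧ σ.t k < u}

/-- A trajectory of the timer-dependent linear impulsive system: on each flow interval the
dynamics depend on the timer, i.e. the time elapsed since the last impulse. -/
def IsTimerTrajectory {n pc pd : ℕ} (σ : ImpulseSeq)
    (A : ℝ → Matrix (Fin n) (Fin n) ℝ) (Ec : ℝ → Matrix (Fin n) (Fin pc) ℝ)
    (J : Matrix (Fin n) (Fin n) ℝ) (Ed : Matrix (Fin n) (Fin pd) ℝ)
    (wc : ℝ → Fin pc → ℝ) (wd : ℕ → Fin pd → ℝ)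
    (x : ℝ → Fin n → ℝ) : Prop :=
  (∀ k, ContinuousOn x (Set.Ioc (σ.t k) (σ.t (k + 1)))) ∧
  (∀ k, ∀ s ∈ Set.Ioo (σ.t k) (σ.t (k + 1)),
    HasDerivAt x (A (s - σ.t k) *ᵥ x s + Ec (s - σ.t k) *ᵥ wc s) s) ∧
  ContinuousWithinAt x (Set.Ici (σ.t 0)) (σ.t 0) ∧
  (∀ k, 1 ≤ k →
    Filter.Tendsto x (nhdsWithin (σ.t k) (Set.Ioi (σ.t k)))
      (nhds (J *ᵥ x (σ.t k) + Ed *ᵥ wd k)))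

/-!
Both parts are comparison arguments for boxes `x ≤ b` with `b` a positive multiple of `λ`.
Because `A` is Metzler, a trajectory touching the face `x i = b i` from inside has
`(A x) i ≤ (A b) i`. So if that velocity is strictly below `b' i` and every jump lands strictly
inside the next box, the trajectory never leaves (continuous induction on each flow interval).
For the unforced system, `Aλ < -αλ` and `Jλ < ρλ` make `b(t) = c ρ^k e^{-α (t - t₀)} λ` such a
box; applying this to `x` and `-x` gives the decay estimate. With inputs in `[0, 1]` the two
linear-programming inequalities make the constant box `x ≤ λ` invariant, and nonnegativity of the
output matrices turns `x ≤ λ`, `w ≤ 𝟙` into the output bounds.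
-/

theorem eventually_nonpos_nhdsGT_of_hasDerivAt {f : ℝ → ℝ} {f' s : ℝ} (hf : HasDerivAt f f' s)
    (hs : f s ≤ 0) (hf' : f s = 0 → f' < 0) : ∀ᶠ z in 𝓝[>] s, f z ≤ 0 := by
  rcases hs.lt_or_eq with hlt | heq
  · exact ((hf.continuousAt.eventually (gt_mem_nhds hlt)).filter_mono nhdsWithin_le_nhds).mono
      fun _ => le_of_lt
  · filter_upwards [hf.hasDerivWithinAt.limsup_slope_le' (lt_irrefl s) (hf' heq),
      self_mem_nhdsWithin] with z hslope hz
    rw [slope_neg_iff_of_le (le_of_lt hz), heq] at hslope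
    exact hslope.le

section

variable {ι : Type*} [Finite ι]

theorem forall_nonpos_Icc_of_hasDerivAt {F F' : ℝ → ι → ℝ} {a b : ℝ}
    (hF : ContinuousOn F (Icc a b)) (hF' : ∀ s ∈ Ico a b, HasDerivAt F (F' s) s)
    (ha : F a ≤ 0) (hbdry : ∀ s ∈ Ico a b, F s ≤ 0 → ∀ i, F s i = 0 → F' s i < 0) :
    ∀ s ∈ Icc a b, F s ≤ 0 := by
  have hclosed : IsClosed (F ⁻¹' Iic 0 ∩ Icc a b) := by
    rw [inter_comm]; exact hF.preimage_isClosed_of_isClosed isClosed_Icc isClosed_Iic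
  refine hclosed.Icc_subset_of_forall_mem_nhdsWithin ha fun s ⟨hs0, hs⟩ => ?_
  exact eventually_all.2 fun i => eventually_nonpos_nhdsGT_of_hasDerivAt
    (hasDerivAt_pi.1 (hF' s hs) i) (hs0 i) (hbdry s hs hs0 i)

theorem forall_nonpos_Ioc_of_hasDerivAt {F F' : ℝ → ι → ℝ} {a b : ℝ} {l : ι → ℝ}
    (hF : ContinuousOn F (Ioc a b)) (hF' : ∀ s ∈ Ioo a b, HasDerivAt F (F' s) s)
    (hlim : Tendsto F (𝓝[>] a) (𝓝 l)) (hl : ∀ i, l i < 0)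
    (hbdry : ∀ s ∈ Ioo a b, F s ≤ 0 → ∀ i, F s i = 0 → F' s i < 0) :
    ∀ s ∈ Ioc a b, F s ≤ 0 := by
  intro s hs
  have hneg : ∀ᶠ z in 𝓝[>] a, F z ≤ 0 := eventually_all.2 fun i =>
    ((tendsto_pi_nhds.1 hlim i).eventually (gt_mem_nhds (hl i))).mono fun _ => le_of_lt
  obtain ⟨a', ⟨ha', has⟩, hFa'⟩ := (Eventually.and (Ioo_mem_nhdsGT hs.1) hneg).exists
  have hsub : Ico a' b ⊆ Ioo a b := fun z hz => ⟨ha'.trans_le hz.1, hz.2⟩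
  exact forall_nonpos_Icc_of_hasDerivAt (hF.mono fun z hz => ⟨ha'.trans_le hz.1, hz.2⟩)
    (fun z hz => hF' z (hsub hz)) hFa' (fun z hz => hbdry z (hsub hz)) s ⟨has.le, hs.2⟩

theorem eventually_nhdsGT_zero_forall_lt_neg_mul {u v : ι → ℝ} (hu : ∀ i, u i < 0) :
    ∀ᶠ ε in 𝓝[>] 0, ∀ i, u i < -ε * v i :=
  nhdsWithin_le_nhds <| eventually_all.2 fun i =>
    ((continuous_neg.mul continuous_const).tendsto' 0 0 (by simp)).eventually
      (lt_mem_nhds (hu i))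

end

theorem mulVec_mono_of_nonneg {R m n : Type*} [Semiring R] [PartialOrder R] [IsOrderedRing R]
    [Fintype n] {M : Matrix m n R} (hM : ∀ i j, 0 ≤ M i j) {u v : n → R} (huv : u ≤ v) :
    M *ᵥ u ≤ M *ᵥ v :=
  fun i => dotProduct_le_dotProduct_of_nonneg_left huv (hM i)

theorem Metzler.mulVec_apply_le {n : ℕ} {A : Matrix (Fin n) (Fin n) ℝ} (hA : Metzler A)
    {x y : Fin n → ℝ} (hxy : x ≤ y) {i : Fin n} (hi : x i = y i) :
    (A *ᵥ x) i ≤ (A *ᵥ y) i := by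
  simp only [mulVec, dotProduct]
  refine Finset.sum_le_sum fun j _ => ?_
  rcases eq_or_ne i j with rfl | hij
  · rw [hi]
  · exact mul_le_mul_of_nonneg_left (hxy j) (hA i j hij)

namespace ImpulseSeq

theorem kappa_self (σ : ImpulseSeq) (s : ℝ) : σ.kappa s s = 0 := by
  have hset : {k : ℕ | 1 ≤ k ∧ s ≤ σ.t k ∧ σ.t k < s} = ∅ :=
    eq_empty_of_forall_notMem fun _ hk => not_lt_of_ge hk.2.1 hk.2.2
  rw [kappa, hset, ncard_empty]

theorem exists_mem_Ioc (σ : ImpulseSeq) {s : ℝ} (hs : σ.t 0 < s) :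
    ∃ k, s ∈ Ioc (σ.t k) (σ.t (k + 1)) := by
  classical
  have hex : ∃ k, s ≤ σ.t k := (σ.tendsto_atTop.eventually_ge_atTop s).exists
  have hpos : Nat.find hex ≠ 0 := fun h0 => (h0 ▸ Nat.find_spec hex).not_gt hs
  refine ⟨Nat.find hex - 1, lt_of_not_ge (Nat.find_min hex (by omega)), ?_⟩
  rw [Nat.sub_add_cancel (Nat.pos_of_ne_zero hpos)]
  exact Nat.find_spec hex

theorem kappa_eq_of_mem_Ioc (σ : ImpulseSeq) {k : ℕ} {s : ℝ}
    (hs : s ∈ Ioc (σ.t k) (σ.t (k + 1))) : σ.kappa (σ.t 0) s = k := by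
  have hset : {j : ℕ | 1 ≤ j ∧ σ.t 0 ≤ σ.t j ∧ σ.t j < s} = ↑(Finset.Icc 1 k) := by
    ext j
    simp only [Set.mem_ofPred_eq, Finset.coe_Icc, Set.mem_Icc]
    refine ⟨fun ⟨h1, _, h2⟩ => ⟨h1, Nat.lt_succ_iff.1 (σ.mono.lt_iff_lt.1 (h2.trans_le hs.2))⟩,
      fun ⟨h1, h2⟩ => ⟨h1, σ.mono.monotone j.zero_le, (σ.mono.monotone h2).trans_lt hs.1⟩⟩
  rw [kappa, hset, Set.ncard_coe_finset, Nat.card_Icc, Nat.add_sub_cancel]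

end ImpulseSeq

namespace IsTimerTrajectory

variable {n pc pd : ℕ} {σ : ImpulseSeq} {A : ℝ → Matrix (Fin n) (Fin n) ℝ}
  {Ec : ℝ → Matrix (Fin n) (Fin pc) ℝ} {J : Matrix (Fin n) (Fin n) ℝ}
  {Ed : Matrix (Fin n) (Fin pd) ℝ} {wc : ℝ → Fin pc → ℝ} {wd : ℕ → Fin pd → ℝ}
  {x : ℝ → Fin n → ℝ}

theorem neg (hx : IsTimerTrajectory σ A Ec J Ed wc wd x) :
    IsTimerTrajectory σ A Ec J Ed (-wc) (-wd) (-x) := by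
  obtain ⟨hcont, hderiv, hinit, hjump⟩ := hx
  refine ⟨fun k => (hcont k).neg, fun k s hs => ?_, hinit.neg, fun k hk => ?_⟩
  · simpa only [Pi.neg_apply, mulVec_neg, neg_add] using (hderiv k s hs).neg
  · have h := (hjump k hk).neg
    rw [neg_add, ← mulVec_neg, ← mulVec_neg] at h
    exact h

theorem le_on_Ioc_of_comparison (hx : IsTimerTrajectory σ A Ec J Ed wc wd x)
    {β β' : ℕ → ℝ → Fin n → ℝ} (hβ : ∀ k s, HasDerivAt (β k) (β' k s) s)
    (hinit : ∀ i, x (σ.t 0) i < β 0 (σ.t 0) i)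
    (hflow : ∀ k, ∀ s ∈ Ioo (σ.t k) (σ.t (k + 1)), x s ≤ β k s → ∀ i, x s i = β k s i →
      (A (s - σ.t k) *ᵥ x s + Ec (s - σ.t k) *ᵥ wc s) i < β' k s i)
    (hjump : ∀ k, x (σ.t (k + 1)) ≤ β k (σ.t (k + 1)) →
      ∀ i, (J *ᵥ x (σ.t (k + 1)) + Ed *ᵥ wd (k + 1)) i < β (k + 1) (σ.t (k + 1)) i) :
    ∀ k, ∀ s ∈ Ioc (σ.t k) (σ.t (k + 1)), x s ≤ β k s := by
  obtain ⟨hcont, hderiv, hx0, hxjump⟩ := hx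
  have step : ∀ k l, Tendsto x (𝓝[>] (σ.t k)) (𝓝 l) → (∀ i, l i < β k (σ.t k) i) →
      ∀ s ∈ Ioc (σ.t k) (σ.t (k + 1)), x s ≤ β k s := by
    intro k l hl hlβ s hs
    refine sub_nonpos.1 <| forall_nonpos_Ioc_of_hasDerivAt (l := l - β k (σ.t k))
      ((hcont k).sub fun s _ => (hβ k s).continuousAt.continuousWithinAt)
      (fun s hs => (hderiv k s hs).sub (hβ k s))
      (hl.sub ((hβ k _).continuousAt.tendsto.mono_left nhdsWithin_le_nhds))
      (fun i => sub_neg.2 (hlβ i)) (fun s hs hle i heq => sub_neg.2 ?_) s hs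
    exact hflow k s hs (sub_nonpos.1 hle) i (sub_eq_zero.1 heq)
  intro k
  induction k with
  | zero =>
    exact step 0 _ (hx0.tendsto.mono_left (nhdsWithin_mono _ Ioi_subset_Ici_self)) hinit
  | succ k ih =>
    exact step (k + 1) _ (hxjump (k + 1) k.succ_pos)
      (hjump k (ih _ ⟨σ.mono k.lt_succ_self, le_rfl⟩))

theorem le_of_comparison (hx : IsTimerTrajectory σ A Ec J Ed wc wd x)
    {β β' : ℕ → ℝ → Fin n → ℝ} (hβ : ∀ k s, HasDerivAt (β k) (β' k s) s)
    (hinit : ∀ i, x (σ.t 0) i < β 0 (σ.t 0) i)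
    (hflow : ∀ k, ∀ s ∈ Ioo (σ.t k) (σ.t (k + 1)), x s ≤ β k s → ∀ i, x s i = β k s i →
      (A (s - σ.t k) *ᵥ x s + Ec (s - σ.t k) *ᵥ wc s) i < β' k s i)
    (hjump : ∀ k, x (σ.t (k + 1)) ≤ β k (σ.t (k + 1)) →
      ∀ i, (J *ᵥ x (σ.t (k + 1)) + Ed *ᵥ wd (k + 1)) i < β (k + 1) (σ.t (k + 1)) i)
    {s : ℝ} (hs : σ.t 0 ≤ s) : x s ≤ β (σ.kappa (σ.t 0) s) s := by
  rcases hs.eq_or_lt with rfl | hs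
  · rw [σ.kappa_self]
    exact fun i => (hinit i).le
  · obtain ⟨k, hk⟩ := σ.exists_mem_Ioc hs
    rw [σ.kappa_eq_of_mem_Ioc hk]
    exact hx.le_on_Ioc_of_comparison hβ hinit hflow hjump k s hk

end IsTimerTrajectory

section ConstantSystem

variable {n pc pd : ℕ} {σ : ImpulseSeq} {A : Matrix (Fin n) (Fin n) ℝ}
  {Ec : Matrix (Fin n) (Fin pc) ℝ} {J : Matrix (Fin n) (Fin n) ℝ}
  {Ed : Matrix (Fin n) (Fin pd) ℝ} {x : ℝ → Fin n → ℝ} {lam : Fin n → ℝ}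

theorem IsTimerTrajectory.le_of_inputs_le_one {wc : ℝ → Fin pc → ℝ} {wd : ℕ → Fin pd → ℝ}
    (hx : IsTimerTrajectory σ (fun _ => A) (fun _ => Ec) J Ed wc wd x)
    (hA : Metzler A) (hEc : ∀ i j, 0 ≤ Ec i j) (hJ : ∀ i j, 0 ≤ J i j)
    (hEd : ∀ i j, 0 ≤ Ed i j) (hlam : ∀ i, 0 < lam i)
    (hflow : ∀ i, (A *ᵥ lam) i + (Ec *ᵥ fun _ => 1) i < 0)
    (hjump : ∀ i, (J *ᵥ lam) i + (Ed *ᵥ fun _ => 1) i < lam i)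
    (hwc : ∀ s i, wc s i ≤ 1) (hwd : ∀ k i, wd k i ≤ 1) (hx0 : x (σ.t 0) = 0)
    {s : ℝ} (hs : σ.t 0 ≤ s) : x s ≤ lam := by
  refine hx.le_of_comparison (β := fun _ _ => lam) (fun _ s => hasDerivAt_const s lam)
    (fun i => by simpa [hx0] using hlam i) (fun k s _ hle i heq => ?_) (fun k hle i => ?_) hs
  · have hAx := hA.mulVec_apply_le hle heq
    have hEcw := mulVec_mono_of_nonneg hEc (hwc s) i
    simp only [Pi.add_apply, Pi.zero_apply]
    linarith [hflow i]
  · have hJx := mulVec_mono_of_nonneg hJ hle i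
    have hEdw := mulVec_mono_of_nonneg hEd (hwd (k + 1)) i
    simp only [Pi.add_apply]
    linarith [hjump i]

theorem IsTimerTrajectory.le_decay_smul
    (hx : IsTimerTrajectory σ (fun _ => A) (fun _ => Ec) J Ed (fun _ => 0) (fun _ => 0) x)
    (hA : Metzler A) (hJ : ∀ i j, 0 ≤ J i j) {α ρ c : ℝ} (hρ : 0 < ρ) (hc : 0 < c)
    (hAα : ∀ i, (A *ᵥ lam) i < -α * lam i) (hJρ : ∀ i, (J *ᵥ lam) i < ρ * lam i)
    (hinit : ∀ i, x (σ.t 0) i < c * lam i) {s : ℝ} (hs : σ.t 0 ≤ s) :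
    x s ≤ (c * ρ ^ σ.kappa (σ.t 0) s * Real.exp (-(α * (s - σ.t 0)))) • lam := by
  have hb_deriv : ∀ k s, HasDerivAt (fun s => c * ρ ^ k * Real.exp (-(α * (s - σ.t 0))))
      (c * ρ ^ k * (Real.exp (-(α * (s - σ.t 0))) * -α)) s := fun k s => by
    simpa using ((((hasDerivAt_id s).sub_const (σ.t 0)).const_mul α).fun_neg.exp.const_mul
      (c * ρ ^ k))
  refine hx.le_of_comparison (fun k s => (hb_deriv k s).smul_const lam)
    (fun i => by simpa using hinit i) (fun k s _ hle i heq => ?_) (fun k hle i => ?_) hs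
  · have hb : 0 < c * ρ ^ k * Real.exp (-(α * (s - σ.t 0))) := by positivity
    have hAx := hA.mulVec_apply_le hle heq
    rw [mulVec_smul] at hAx
    have := mul_lt_mul_of_pos_left (hAα i) hb
    simp only [mulVec_zero, add_zero, Pi.smul_apply, smul_eq_mul] at hAx ⊢
    linarith
  · have hb : 0 < c * ρ ^ k * Real.exp (-(α * (σ.t (k + 1) - σ.t 0))) := by positivity
    have hJx := mulVec_mono_of_nonneg hJ hle i
    rw [mulVec_smul] at hJx
    have := mul_lt_mul_of_pos_left (hJρ i) hb
    simp only [mulVec_zero, add_zero, Pi.smul_apply, smul_eq_mul, pow_succ] at hJx this ⊢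
    linarith

theorem IsTimerTrajectory.norm_le_decay
    (hx : IsTimerTrajectory σ (fun _ => A) (fun _ => Ec) J Ed (fun _ => 0) (fun _ => 0) x)
    (hA : Metzler A) (hJ : ∀ i j, 0 ≤ J i j) (hlam : ∀ i, 0 < lam i) {α ρ : ℝ} (hρ : 0 < ρ)
    (hAα : ∀ i, (A *ᵥ lam) i < -α * lam i) (hJρ : ∀ i, (J *ᵥ lam) i < ρ * lam i)
    {s : ℝ} (hs : σ.t 0 ≤ s) :
    ‖x s‖ ≤ ‖lam‖ * ‖lam⁻¹‖ *
      (ρ ^ σ.kappa (σ.t 0) s * (Real.exp (-(α * (s - σ.t 0))) * ‖x (σ.t 0)‖)) := by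
  have hxneg := hx.neg
  rw [show (-fun _ : ℝ => (0 : Fin pc → ℝ)) = fun _ => 0 from neg_zero,
    show (-fun _ : ℕ => (0 : Fin pd → ℝ)) = fun _ => 0 from neg_zero] at hxneg
  have hbound : ∀ c > ‖x (σ.t 0)‖ * ‖lam⁻¹‖,
      ‖x s‖ ≤ c * ρ ^ σ.kappa (σ.t 0) s * Real.exp (-(α * (s - σ.t 0))) * ‖lam‖ := by
    intro c hc
    have hinit : ∀ i, |x (σ.t 0) i| < c * lam i := fun i => calc
      |x (σ.t 0) i| ≤ ‖x (σ.t 0)‖ * (lam i)⁻¹ * lam i := by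
          rw [inv_mul_cancel_right₀ (hlam i).ne']; exact norm_le_pi_norm (x (σ.t 0)) i
      _ ≤ ‖x (σ.t 0)‖ * ‖lam⁻¹‖ * lam i := by
          have hinv : (lam i)⁻¹ ≤ ‖lam⁻¹‖ :=
            (Real.le_norm_self _).trans (norm_le_pi_norm lam⁻¹ i)
          gcongr
          exact (hlam i).le
      _ < c * lam i := mul_lt_mul_of_pos_right hc (hlam i)
    have hc0 : 0 < c := lt_of_le_of_lt (by positivity) hc
    have hup := hx.le_decay_smul hA hJ hρ hc0 hAα hJρ
      (fun i => (le_abs_self _).trans_lt (hinit i)) hs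
    have hlow := hxneg.le_decay_smul hA hJ hρ hc0 hAα hJρ
      (fun i => (neg_le_abs _).trans_lt (hinit i)) hs
    refine (pi_norm_le_iff_of_nonneg (by positivity)).2 fun i => ?_
    calc ‖x s i‖ ≤ c * ρ ^ σ.kappa (σ.t 0) s * Real.exp (-(α * (s - σ.t 0))) * lam i :=
          abs_le.2 ⟨neg_le.1 (hlow i), hup i⟩
      _ ≤ c * ρ ^ σ.kappa (σ.t 0) s * Real.exp (-(α * (s - σ.t 0))) * ‖lam‖ := by
          gcongr
          exact (Real.le_norm_self _).trans (norm_le_pi_norm lam i)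
  have hcont : Continuous fun c : ℝ =>
      c * ρ ^ σ.kappa (σ.t 0) s * Real.exp (-(α * (s - σ.t 0))) * ‖lam‖ := by fun_prop
  have hlim := ge_of_tendsto
    (hcont.continuousWithinAt (s := Ioi _) (x := ‖x (σ.t 0)‖ * ‖lam⁻¹‖)).tendsto
    (eventually_nhdsWithin_of_forall hbound)
  exact hlim.trans_eq (by ring)

end ConstantSystem

theorem arbitrary_dwell_time_Linf_suff_general {n pc pd qc qd : ℕ}
    (A : Matrix (Fin n) (Fin n) ℝ) (Ec : Matrix (Fin n) (Fin pc) ℝ)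
    (Cc : Matrix (Fin qc) (Fin n) ℝ) (Fc : Matrix (Fin qc) (Fin pc) ℝ)
    (J : Matrix (Fin n) (Fin n) ℝ) (Ed : Matrix (Fin n) (Fin pd) ℝ)
    (Cd : Matrix (Fin qd) (Fin n) ℝ) (Fd : Matrix (Fin qd) (Fin pd) ℝ)
    (hAM : Metzler A)
    (hEcp : ∀ i j, 0 ≤ Ec i j) (hCcp : ∀ i j, 0 ≤ Cc i j) (hFcp : ∀ i j, 0 ≤ Fc i j)
    (hJp : ∀ i j, 0 ≤ J i j) (hEdp : ∀ i j, 0 ≤ Ed i j)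
    (hCdp : ∀ i j, 0 ≤ Cd i j) (hFdp : ∀ i j, 0 ≤ Fd i j)
    (lam : Fin n → ℝ) (hlam : ∀ i, 0 < lam i) (γ : ℝ)
    (hflow : ∀ i, (A *ᵥ lam + Ec *ᵥ (fun _ => (1:ℝ))) i < 0)
    (hperfc : ∀ i, (Cc *ᵥ lam + Fc *ᵥ (fun _ => (1:ℝ))) i - γ < 0)
    (hjump : ∀ i, ((J - (1 : Matrix (Fin n) (Fin n) ℝ)) *ᵥ lam + Ed *ᵥ (fun _ => (1:ℝ))) i < 0)
    (hperfd : ∀ i, (Cd *ᵥ lam + Fd *ᵥ (fun _ => (1:ℝ))) i - γ < 0) :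
    ∀ σ : ImpulseSeq,
      (∃ (M α ρ : ℝ), 0 < M ∧ 0 < α ∧ ρ ∈ Set.Ioo (0 : ℝ) 1 ∧
        ∀ x : ℝ → Fin n → ℝ,
          IsTimerTrajectory σ (fun _ => A) (fun _ => Ec) J Ed
            (fun _ => 0) (fun _ => (0 : Fin pd → ℝ)) x →
          ∀ s : ℝ, σ.t 0 ≤ s →
            ‖x s‖ ≤ M * (ρ ^ (σ.kappa (σ.t 0) s) *
              (Real.exp (-(α * (s - σ.t 0))) * ‖x (σ.t 0)‖))) ∧
      (∀ (wc : ℝ → Fin pc → ℝ) (wd : ℕ → Fin pd → ℝ) (x : ℝ → Fin n → ℝ),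
        Continuous wc →
        (∀ s i, 0 ≤ wc s i ∧ wc s i ≤ 1) →
        (∀ k i, 0 ≤ wd k i ∧ wd k i ≤ 1) →
        IsTimerTrajectory σ (fun _ => A) (fun _ => Ec) J Ed wc wd x →
        x (σ.t 0) = 0 →
        (∀ s : ℝ, σ.t 0 ≤ s → ∀ i, (Cc *ᵥ x s + Fc *ᵥ wc s) i ≤ γ) ∧
        (∀ k : ℕ, 1 ≤ k → ∀ i, (Cd *ᵥ x (σ.t k) + Fd *ᵥ wd k) i ≤ γ)) := by
  intro σ
  simp only [Pi.add_apply] at hflow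
  have hjump' : ∀ i, (J *ᵥ lam) i + (Ed *ᵥ fun _ => 1) i < lam i := fun i => by
    have h := hjump i
    simp only [sub_mulVec, one_mulVec, Pi.add_apply, Pi.sub_apply] at h
    linarith
  refine ⟨?_, fun wc wd x _ hwc hwd hx hx0 => ?_⟩
  · have hEc1 : ∀ i, 0 ≤ (Ec *ᵥ fun _ => 1) i := fun i =>
      dotProduct_nonneg_of_nonneg (hEcp i) fun _ => zero_le_one
    have hEd1 : ∀ i, 0 ≤ (Ed *ᵥ fun _ => 1) i := fun i =>
      dotProduct_nonneg_of_nonneg (hEdp i) fun _ => zero_le_one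
    have hAlam : ∀ i, (A *ᵥ lam) i < 0 := fun i => by linarith [hflow i, hEc1 i]
    have hJlam : ∀ i, (J *ᵥ lam) i - lam i < 0 := fun i => by linarith [hjump' i, hEd1 i]
    obtain ⟨α, hAα, hα⟩ := ((eventually_nhdsGT_zero_forall_lt_neg_mul (v := lam) hAlam).and
      self_mem_nhdsWithin).exists
    obtain ⟨ε, hJε, hε⟩ := ((eventually_nhdsGT_zero_forall_lt_neg_mul (v := lam) hJlam).and
      (Ioo_mem_nhdsGT one_pos)).exists
    have hρ : 0 < 1 - ε := sub_pos.2 hε.2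
    -- `+ 1` keeps `M` positive when `n = 0`
    refine ⟨‖lam‖ * ‖lam⁻¹‖ + 1, α, 1 - ε, by positivity, hα, ⟨hρ, by linarith [hε.1]⟩,
      fun x hx s hs => ?_⟩
    calc ‖x s‖ ≤ ‖lam‖ * ‖lam⁻¹‖ * _ :=
          hx.norm_le_decay hAM hJp hlam hρ hAα (fun i => by linarith [hJε i]) hs
      _ ≤ _ := mul_le_mul_of_nonneg_right (le_add_of_nonneg_right zero_le_one)
          (mul_nonneg (pow_nonneg hρ.le _) (by positivity))
  · have hbox : ∀ s, σ.t 0 ≤ s → x s ≤ lam := fun s hs =>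
      hx.le_of_inputs_le_one hAM hEcp hJp hEdp hlam hflow hjump' (fun s i => (hwc s i).2)
        (fun k i => (hwd k i).2) hx0 hs
    refine ⟨fun s hs i => ?_, fun k _ i => ?_⟩
    · have hout := add_le_add (mulVec_mono_of_nonneg hCcp (hbox s hs))
        (mulVec_mono_of_nonneg hFcp fun j => (hwc s j).2)
      linarith [hout i, hperfc i]
    · have hout := add_le_add (mulVec_mono_of_nonneg hCdp (hbox _ (σ.mono.monotone k.zero_le)))
        (mulVec_mono_of_nonneg hFdp fun j => (hwd k j).2)
      linarith [hout i, hperfd i]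

/-- Arbitrary dwell-time: the linear-programming conditions guarantee, for every impulse
time sequence, uniform exponential stability and the hybrid `L∞×ℓ∞` performance level `γ`
for the impulsive system with constant matrices. -/
theorem arbitrary_dwell_time_Linf_suff {n pc pd qc qd : ℕ}
    (A : Matrix (Fin n) (Fin n) ℝ) (Ec : Matrix (Fin n) (Fin pc) ℝ)
    (Cc : Matrix (Fin qc) (Fin n) ℝ) (Fc : Matrix (Fin qc) (Fin pc) ℝ)
    (J : Matrix (Fin n) (Fin n) ℝ) (Ed : Matrix (Fin n) (Fin pd) ℝ)
    (Cd : Matrix (Fin qd) (Fin n) ℝ) (Fd : Matrix (Fin qd) (Fin pd) ℝ)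
    (hAM : Metzler A)
    (hEcp : ∀ i j, 0 ≤ Ec i j) (hCcp : ∀ i j, 0 ≤ Cc i j) (hFcp : ∀ i j, 0 ≤ Fc i j)
    (hJp : ∀ i j, 0 ≤ J i j) (hEdp : ∀ i j, 0 ≤ Ed i j)
    (hCdp : ∀ i j, 0 ≤ Cd i j) (hFdp : ∀ i j, 0 ≤ Fd i j)
    (lam : Fin n → ℝ) (hlam : ∀ i, 0 < lam i) (γ : ℝ) (hγ : 0 < γ)
    (hflow : ∀ i, (A *ᵥ lam + Ec *ᵥ (fun _ => (1:ℝ))) i < 0)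
    (hperfc : ∀ i, (Cc *ᵥ lam + Fc *ᵥ (fun _ => (1:ℝ))) i - γ < 0)
    (hjump : ∀ i, ((J - (1 : Matrix (Fin n) (Fin n) ℝ)) *ᵥ lam + Ed *ᵥ (fun _ => (1:ℝ))) i < 0)
    (hperfd : ∀ i, (Cd *ᵥ lam + Fd *ᵥ (fun _ => (1:ℝ))) i - γ < 0) :
    ∀ σ : ImpulseSeq,
      (∃ (M α ρ : ℝ), 0 < M ∧ 0 < α ∧ ρ ∈ Set.Ioo (0 : ℝ) 1 ∧
        ∀ x : ℝ → Fin n → ℝ,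
          IsTimerTrajectory σ (fun _ => A) (fun _ => Ec) J Ed
            (fun _ => 0) (fun _ => (0 : Fin pd → ℝ)) x →
          ∀ s : ℝ, σ.t 0 ≤ s →
            ‖x s‖ ≤ M * (ρ ^ (σ.kappa (σ.t 0) s) *
              (Real.exp (-(α * (s - σ.t 0))) * ‖x (σ.t 0)‖))) ∧
      (∀ (wc : ℝ → Fin pc → ℝ) (wd : ℕ → Fin pd → ℝ) (x : ℝ → Fin n → ℝ),
        Continuous wc →
        (∀ s i, 0 ≤ wc s i ∧ wc s i ≤ 1) →
        (∀ k i, 0 ≤ wd k i ∧ wd k i ≤ 1) →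
        IsTimerTrajectory σ (fun _ => A) (fun _ => Ec) J Ed wc wd x →
        x (σ.t 0) = 0 →
        (∀ s : ℝ, σ.t 0 ≤ s → ∀ i, (Cc *ᵥ x s + Fc *ᵥ wc s) i ≤ γ) ∧
        (∀ k : ℕ, 1 ≤ k → ∀ i, (Cd *ᵥ x (σ.t k) + Fd *ᵥ wd k) i ≤ γ)) :=
  arbitrary_dwell_time_Linf_suff_general A Ec Cc Fc J Ed Cd Fd hAM hEcp hCcp hFcp hJp hEdp hCdp hFdp
    lam hlam γ hflow hperfc hjump hperfd
end

section
/- Let A ∈ ℝ^{n×n}, B_c ∈ ℝ^{n×m_c}, J ∈ ℝ^{n×n}, B_d ∈ ℝ^{n×m_d}, and let E_c, E_d, F_c, F_d and C_c ∈ ℝ^{q_c×n}, D_c ∈ ℝ^{q_c×m_c}, C_d ∈ ℝ^{q_d×n}, D_d ∈ ℝ^{q_d×m_d} be constant matrices with E_c, E_d, F_c, F_d ≥ 0. Suppose there exist a diagonal matrix X ∈ ℝ^{n×n} with positive diagonal entries, matrices U_c ∈ ℝ^{m_c×n}, U_d ∈ ℝ^{m_d×n}, and scalars ε > 0, α > 0,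 γ > 0 such that: AX + B_cU_c + αI ≥ 0, JX + B_dU_d ≥ 0, C_cX + D_cU_c ≥ 0, C_dX + D_dU_d ≥ 0, (AX + B_cU_c)𝟙 + E_c𝟙 ≤ 0, (JX + B_dU_d − X + εI)𝟙 + E_d𝟙 ≤ 0, (C_cX + D_cU_c)𝟙 + F_c𝟙 − γ𝟙 ≤ 0, and (C_dX + D_dU_d)𝟙 + F_d𝟙 − γ𝟙 ≤ 0. Then, with the state-feedback gains K_c := U_cX⁻¹ and K_d := U_dX⁻¹ and the vector λ := X𝟙 > 0, the closed-loop matrices satisfy: A + B_cK_c is Metzler; J + B_dK_d ≥ 0, C_c + D_cK_c ≥ 0, C_d + D_dK_d ≥ 0; and (A + B_cK_c)λ + E_c𝟙 ≤ 0, (J + B_dK_d)λ − λ + E_d𝟙 ≤ −ε𝟙, (C_c + D_cK_c)λ + F_c𝟙 ≤ γ𝟙, (C_d + D_dK_d)λ + F_d𝟙 ≤ γ𝟙. In particular, the closed-loop impulsive system ẋ = (A + B_cK_c)x + E_cw_c with jumps x(t_k⁺) = (J + B_dK_d)x(t_k) + E_dw_d(k) is internally positive and satisfies the linear-programming stability and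 L∞×ℓ∞ performance conditions for arbitrary dwell-time with certificate λ. -/
open Matrix

/-- Convex state-feedback design under arbitrary dwell-time: the change of variables
`K_c = U_c X⁻¹`, `K_d = U_d X⁻¹`, `λ = X𝟙` turns the synthesis LP into the closed-loop
internal positivity, stability and `L∞×ℓ∞` performance conditions. -/
theorem arbitrary_dwell_time_stabilization {n mc md pc pd qc qd : ℕ}
    (A : Matrix (Fin n) (Fin n) ℝ) (Bc : Matrix (Fin n) (Fin mc) ℝ)
    (J : Matrix (Fin n) (Fin n) ℝ) (Bd : Matrix (Fin n) (Fin md) ℝ)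
    (Ec : Matrix (Fin n) (Fin pc) ℝ) (Ed : Matrix (Fin n) (Fin pd) ℝ)
    (Cc : Matrix (Fin qc) (Fin n) ℝ) (Dc : Matrix (Fin qc) (Fin mc) ℝ)
    (Cd : Matrix (Fin qd) (Fin n) ℝ) (Dd : Matrix (Fin qd) (Fin md) ℝ)
    (Fc : Matrix (Fin qc) (Fin pc) ℝ) (Fd : Matrix (Fin qd) (Fin pd) ℝ)
    (hEcp : ∀ i j, 0 ≤ Ec i j) (hEdp : ∀ i j, 0 ≤ Ed i j)
    (hFcp : ∀ i j, 0 ≤ Fc i j) (hFdp : ∀ i j, 0 ≤ Fd i j)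
    (X : Matrix (Fin n) (Fin n) ℝ)
    (hXdiag : ∀ i j, i ≠ j → X i j = 0) (hXpos : ∀ i, 0 < X i i)
    (Uc : Matrix (Fin mc) (Fin n) ℝ) (Ud : Matrix (Fin md) (Fin n) ℝ)
    (ε α γ : ℝ) (hε : 0 < ε) (hα : 0 < α) (hγ : 0 < γ)
    (h1 : ∀ i j, 0 ≤ (A * X + Bc * Uc + α • (1 : Matrix (Fin n) (Fin n) ℝ)) i j)
    (h2 : ∀ i j, 0 ≤ (J * X + Bd * Ud) i j)
    (h3 : ∀ i j, 0 ≤ (Cc * X + Dc * Uc) i j)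
    (h4 : ∀ i j, 0 ≤ (Cd * X + Dd * Ud) i j)
    (h5 : ∀ i, ((A * X + Bc * Uc) *ᵥ (fun _ => (1:ℝ)) + Ec *ᵥ (fun _ => (1:ℝ))) i ≤ 0)
    (h6 : ∀ i, ((J * X + Bd * Ud - X + ε • (1 : Matrix (Fin n) (Fin n) ℝ)) *ᵥ (fun _ => (1:ℝ))
        + Ed *ᵥ (fun _ => (1:ℝ))) i ≤ 0)
    (h7 : ∀ i, ((Cc * X + Dc * Uc) *ᵥ (fun _ => (1:ℝ)) + Fc *ᵥ (fun _ => (1:ℝ))) i - γ ≤ 0)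
    (h8 : ∀ i, ((Cd * X + Dd * Ud) *ᵥ (fun _ => (1:ℝ)) + Fd *ᵥ (fun _ => (1:ℝ))) i - γ ≤ 0) :
    (∀ i, 0 < (X *ᵥ (fun _ => (1:ℝ))) i) ∧
    Metzler (A + Bc * (Uc * X⁻¹)) ∧
    (∀ i j, 0 ≤ (J + Bd * (Ud * X⁻¹)) i j) ∧
    (∀ i j, 0 ≤ (Cc + Dc * (Uc * X⁻¹)) i j) ∧
    (∀ i j, 0 ≤ (Cd + Dd * (Ud * X⁻¹)) i j) ∧
    (∀ i, ((A + Bc * (Uc * X⁻¹)) *ᵥ (X *ᵥ (fun _ => (1:ℝ)))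
        + Ec *ᵥ (fun _ => (1:ℝ))) i ≤ 0) ∧
    (∀ i, ((J + Bd * (Ud * X⁻¹)) *ᵥ (X *ᵥ (fun _ => (1:ℝ))) - X *ᵥ (fun _ => (1:ℝ))
        + Ed *ᵥ (fun _ => (1:ℝ))) i ≤ -ε) ∧
    (∀ i, ((Cc + Dc * (Uc * X⁻¹)) *ᵥ (X *ᵥ (fun _ => (1:ℝ)))
        + Fc *ᵥ (fun _ => (1:ℝ))) i ≤ γ) ∧
    (∀ i, ((Cd + Dd * (Ud * X⁻¹)) *ᵥ (X *ᵥ (fun _ => (1:ℝ)))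
        + Fd *ᵥ (fun _ => (1:ℝ))) i ≤ γ) := by
  classical
  have hXd : X = Matrix.diagonal (fun i => X i i) := by
    ext i j
    by_cases h : i = j
    · subst h; simp [Matrix.diagonal]
    · simp [Matrix.diagonal, h, hXdiag i j h]
  have hXne : ∀ i, X i i ≠ 0 := fun i => (hXpos i).ne'
  set Y : Matrix (Fin n) (Fin n) ℝ := Matrix.diagonal (fun i => (X i i)⁻¹) with hY
  have hXY : X * Y = 1 := by
    rw [hXd, hY, Matrix.diagonal_mul_diagonal]
    ext i j
    by_cases h : i = j
    · subst h; simp [Matrix.diagonal, mul_inv_cancel₀ (hXne i)]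
    · simp [Matrix.diagonal, h, Matrix.one_apply_ne h]
  have hYX : Y * X = 1 := by
    rw [hXd, hY, Matrix.diagonal_mul_diagonal]
    ext i j
    by_cases h : i = j
    · subst h; simp [Matrix.diagonal, inv_mul_cancel₀ (hXne i)]
    · simp [Matrix.diagonal, h, Matrix.one_apply_ne h]
  have hinv : X⁻¹ = Y := Matrix.inv_eq_right_inv hXY
  have hmain : ∀ {k l : ℕ} (C : Matrix (Fin k) (Fin n) ℝ) (D : Matrix (Fin k) (Fin l) ℝ)
      (U : Matrix (Fin l) (Fin n) ℝ), (C + D * (U * X⁻¹)) * X = C * X + D * U := by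
    intro k l C D U
    rw [Matrix.add_mul, Matrix.mul_assoc D, Matrix.mul_assoc U, hinv, hYX, Matrix.mul_one]
  have hmain2 : ∀ {k l : ℕ} (C : Matrix (Fin k) (Fin n) ℝ) (D : Matrix (Fin k) (Fin l) ℝ)
      (U : Matrix (Fin l) (Fin n) ℝ), (C + D * (U * X⁻¹)) = (C * X + D * U) * X⁻¹ := by
    intro k l C D U
    rw [← hmain C D U, Matrix.mul_assoc, hinv, hXY, Matrix.mul_one]
  have hentry : ∀ {k l : ℕ} (C : Matrix (Fin k) (Fin n) ℝ) (D : Matrix (Fin k) (Fin l) ℝ)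
      (U : Matrix (Fin l) (Fin n) ℝ) (i : Fin k) (j : Fin n),
      (C + D * (U * X⁻¹)) i j = (C * X + D * U) i j * (X j j)⁻¹ := by
    intro k l C D U i j
    rw [hmain2 C D U, hinv, hY, Matrix.mul_diagonal]
  have hmv : ∀ {k l : ℕ} (C : Matrix (Fin k) (Fin n) ℝ) (D : Matrix (Fin k) (Fin l) ℝ)
      (U : Matrix (Fin l) (Fin n) ℝ),
      (C + D * (U * X⁻¹)) *ᵥ (X *ᵥ (fun _ => (1:ℝ))) = (C * X + D * U) *ᵥ (fun _ => (1:ℝ)) := by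
    intro k l C D U
    rw [Matrix.mulVec_mulVec, hmain C D U]
  refine ⟨?_, ?_, ?_, ?_, ?_, ?_, ?_, ?_, ?_⟩
  · intro i
    have : (X *ᵥ (fun _ => (1:ℝ))) i = X i i := by
      conv_lhs => rw [hXd]
      simp [Matrix.mulVec_diagonal]
    rw [this]; exact hXpos i
  · intro i j hij
    rw [hentry A Bc Uc i j]
    refine mul_nonneg ?_ (inv_nonneg.2 (hXpos j).le)
    have := h1 i j
    simpa [Matrix.one_apply_ne hij] using this
  · intro i j
    rw [hentry J Bd Ud i j]
    exact mul_nonneg (h2 i j) (inv_nonneg.2 (hXpos j).le)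
  · intro i j
    rw [hentry Cc Dc Uc i j]
    exact mul_nonneg (h3 i j) (inv_nonneg.2 (hXpos j).le)
  · intro i j
    rw [hentry Cd Dd Ud i j]
    exact mul_nonneg (h4 i j) (inv_nonneg.2 (hXpos j).le)
  · intro i
    rw [hmv A Bc Uc]
    exact h5 i
  · intro i
    have h6i := h6 i
    have hsmul : ((ε • (1 : Matrix (Fin n) (Fin n) ℝ)) *ᵥ (fun _ => (1:ℝ))) i = ε := by
      simp [Matrix.smul_mulVec, Matrix.mulVec_one]
    have hexp : ((J * X + Bd * Ud - X + ε • (1 : Matrix (Fin n) (Fin n) ℝ)) *ᵥ (fun _ => (1:ℝ))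
        + Ed *ᵥ (fun _ => (1:ℝ))) i
        = ((J * X + Bd * Ud) *ᵥ (fun _ => (1:ℝ))) i - (X *ᵥ (fun _ => (1:ℝ))) i + ε
          + (Ed *ᵥ (fun _ => (1:ℝ))) i := by
      rw [Matrix.add_mulVec, Matrix.sub_mulVec]
      simp only [Pi.add_apply, Pi.sub_apply, hsmul]
    rw [hexp] at h6i
    simp only [Pi.add_apply, Pi.sub_apply, hmv J Bd Ud]
    linarith
  · intro i
    have h7i := h7 i
    simp only [Pi.add_apply] at h7i ⊢
    rw [hmv Cc Dc Uc]
    linarith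
  · intro i
    have h8i := h8 i
    simp only [Pi.add_apply] at h8i ⊢
    rw [hmv Cd Dd Ud]
    linarith
end

section
/- Let 0 < T_min ≤ T_max, γ > 0, let A : [0,T_max] → ℝ^{n×n}, E_c : [0,T_max] → ℝ^{n×p_c}, C_c : [0,T_max] → ℝ^{q_c×n}, F_c : [0,T_max] → ℝ^{q_c×p_c} be continuous, and let J, E_d, C_d, F_d be constant matrices. Then the following are equivalent: (i) there exists a continuously differentiable function ζ : [0,T_max] → ℝ^n with ζ(0) > 0 such that −ζ̇(τ) + A(τ)ζ(τ) + E_c(τ)𝟙 < 0 and C_c(τ)ζ(τ) + F_c(τ)𝟙 − γ𝟙 < 0 for all τ ∈ [0,T_max], and Jζ(θ) − ζ(0) + E_d𝟙 < 0 and C_dζ(θ) + F_d𝟙 − γ𝟙 < 0 for all θ ∈ [T_min,T_max]; (ii) there exists a function ζ : [0,T_max] → ℝ^n each of whose components is the restriction of a real polynomial, with ζ(0) > 0, satisfying the same four inequalities. -/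
open Matrix

/-- Antiderivative of a real polynomial with zero constant term. -/
noncomputable def pAntideriv (q : Polynomial ℝ) : Polynomial ℝ :=
  q.sum fun k a => Polynomial.C (a / (k + 1)) * Polynomial.X ^ (k + 1)

lemma pAntideriv_derivative (q : Polynomial ℝ) : (pAntideriv q).derivative = q := by
  unfold pAntideriv
  rw [Polynomial.sum, Polynomial.derivative_sum]
  conv_rhs => rw [← Polynomial.sum_C_mul_X_pow_eq q, Polynomial.sum]
  refine Finset.sum_congr rfl fun k _ => ?_
  rw [Polynomial.derivative_C_mul, Polynomial.derivative_X_pow]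
  simp only [Nat.add_sub_cancel, Nat.cast_add, Nat.cast_one]
  rw [← mul_assoc, ← Polynomial.C_mul, div_mul_cancel₀]
  exact Nat.cast_add_one_ne_zero k

lemma pAntideriv_eval_zero (q : Polynomial ℝ) : (pAntideriv q).eval 0 = 0 := by
  unfold pAntideriv
  rw [Polynomial.sum, Polynomial.eval_finset_sum]
  refine Finset.sum_eq_zero fun k _ => ?_
  simp [zero_pow (Nat.succ_ne_zero k)]

/-- On a compact set, finitely many strictly negative continuous functions admit a
uniform negative margin. -/
lemma aux_neg_margin {m : Type*} [Fintype m] {K : Set ℝ} (hK : IsCompact K)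
    {g : ℝ → m → ℝ} (hg : ∀ i, ContinuousOn (fun x => g x i) K)
    (h : ∀ x ∈ K, ∀ i, g x i < 0) :
    ∃ ε > 0, ∀ x ∈ K, ∀ i, g x i ≤ -ε := by
  rcases K.eq_empty_or_nonempty with rfl | hne
  · exact ⟨1, one_pos, by simp⟩
  have key : ∀ i : m, ∃ ε > 0, ∀ x ∈ K, g x i ≤ -ε := by
    intro i
    obtain ⟨x0, hx0, hmax⟩ := hK.exists_isMaxOn hne (hg i)
    exact ⟨-(g x0 i), by linarith [h x0 hx0 i], fun x hx => by
      have := hmax hx; simpa using this⟩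
  choose ε hεpos hε using key
  set N : ℕ := (Finset.univ : Finset m).sup (fun i => ⌈(ε i)⁻¹⌉₊) with hN
  refine ⟨((N : ℝ) + 1)⁻¹, by positivity, fun x hx i => ?_⟩
  have h1 : (ε i)⁻¹ ≤ (N : ℝ) + 1 := by
    calc (ε i)⁻¹ ≤ (⌈(ε i)⁻¹⌉₊ : ℝ) := Nat.le_ceil _
    _ ≤ (N : ℝ) := Nat.cast_le.mpr (Finset.le_sup (f := fun i => ⌈(ε i)⁻¹⌉₊) (Finset.mem_univ i))
    _ ≤ (N : ℝ) + 1 := by linarith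
  have h2 : ((N : ℝ) + 1)⁻¹ ≤ ε i := by
    rw [inv_le_comm₀ (by positivity) (hεpos i)]
    exact h1
  have := hε i x hx
  linarith

/-- On a compact set, finitely many continuous functions are uniformly bounded. -/
lemma aux_bound {m : Type*} [Fintype m] {K : Set ℝ} (hK : IsCompact K)
    {g : ℝ → m → ℝ} (hg : ∀ i, ContinuousOn (fun x => g x i) K) :
    ∃ M > 0, ∀ x ∈ K, ∀ i, |g x i| ≤ M := by
  rcases K.eq_empty_or_nonempty with rfl | hne
  · exact ⟨1, one_pos, by simp⟩
  have key : ∀ i : m, ∃ C, ∀ x ∈ K, |g x i| ≤ C := by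
    intro i
    obtain ⟨x0, hx0, hmax⟩ := hK.exists_isMaxOn hne ((hg i).abs)
    exact ⟨|g x0 i|, fun x hx => hmax hx⟩
  choose C hC using key
  set N : ℕ := (Finset.univ : Finset m).sup (fun i => ⌈C i⌉₊) with hN
  refine ⟨(N : ℝ) + 1, by positivity, fun x hx i => ?_⟩
  calc |g x i| ≤ C i := hC i x hx
  _ ≤ (⌈C i⌉₊ : ℝ) := Nat.le_ceil _
  _ ≤ (N : ℝ) := Nat.cast_le.mpr (Finset.le_sup (f := fun i => ⌈C i⌉₊) (Finset.mem_univ i))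
  _ ≤ (N : ℝ) + 1 := by linarith

lemma aux_sum_diff_bound {m : ℕ} (M : Fin m → ℝ) (u v : Fin m → ℝ) (MA e : ℝ)
    (hM : ∀ j, |M j| ≤ MA) (huv : ∀ j, |u j - v j| ≤ e) :
    |(∑ j, M j * u j) - ∑ j, M j * v j| ≤ (m : ℝ) * MA * e := by
  rcases Nat.eq_zero_or_pos m with rfl | hm
  · simp
  have he : 0 ≤ e := (abs_nonneg _).trans (huv ⟨0, hm⟩)
  rw [← Finset.sum_sub_distrib]
  calc |∑ j, (M j * u j - M j * v j)| ≤ ∑ j, |M j * u j - M j * v j| :=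
        Finset.abs_sum_le_sum_abs _ _
  _ ≤ ∑ _j : Fin m, MA * e := by
      refine Finset.sum_le_sum fun j _ => ?_
      rw [← mul_sub, abs_mul]
      exact mul_le_mul (hM j) (huv j) (abs_nonneg _) ((abs_nonneg (M j)).trans (hM j))
  _ = (m : ℝ) * MA * e := by simp [Finset.sum_const, mul_assoc]

/-- The range dwell-time stability/performance conditions admit a continuously differentiable
certificate if and only if they admit a polynomial certificate. -/
theorem range_dwell_time_polynomial_certificate_iff {n pc qc qd pd : ℕ}
    (Tmin Tmax γ : ℝ) (hT : 0 < Tmin) (hTT : Tmin ≤ Tmax) (hγ : 0 < γ)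
    (A : ℝ → Matrix (Fin n) (Fin n) ℝ) (Ec : ℝ → Matrix (Fin n) (Fin pc) ℝ)
    (Cc : ℝ → Matrix (Fin qc) (Fin n) ℝ) (Fc : ℝ → Matrix (Fin qc) (Fin pc) ℝ)
    (hA : ContinuousOn A (Set.Icc 0 Tmax)) (hEc : ContinuousOn Ec (Set.Icc 0 Tmax))
    (hCc : ContinuousOn Cc (Set.Icc 0 Tmax)) (hFc : ContinuousOn Fc (Set.Icc 0 Tmax))
    (J : Matrix (Fin n) (Fin n) ℝ) (Ed : Matrix (Fin n) (Fin pd) ℝ)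
    (Cd : Matrix (Fin qd) (Fin n) ℝ) (Fd : Matrix (Fin qd) (Fin pd) ℝ) :
    (∃ ζ ζ' : ℝ → Fin n → ℝ,
      (∀ τ ∈ Set.Icc (0 : ℝ) Tmax, HasDerivWithinAt ζ (ζ' τ) (Set.Icc 0 Tmax) τ) ∧
      ContinuousOn ζ' (Set.Icc 0 Tmax) ∧
      (∀ i, 0 < ζ 0 i) ∧
      (∀ τ ∈ Set.Icc (0 : ℝ) Tmax, ∀ i,
        (-(ζ' τ) + A τ *ᵥ ζ τ + Ec τ *ᵥ (fun _ => (1:ℝ))) i < 0) ∧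
      (∀ τ ∈ Set.Icc (0 : ℝ) Tmax, ∀ i,
        (Cc τ *ᵥ ζ τ + Fc τ *ᵥ (fun _ => (1:ℝ))) i - γ < 0) ∧
      (∀ θ ∈ Set.Icc Tmin Tmax, ∀ i,
        (J *ᵥ ζ θ - ζ 0 + Ed *ᵥ (fun _ => (1:ℝ))) i < 0) ∧
      (∀ θ ∈ Set.Icc Tmin Tmax, ∀ i,
        (Cd *ᵥ ζ θ + Fd *ᵥ (fun _ => (1:ℝ))) i - γ < 0))
    ↔
    (∃ P : Fin n → Polynomial ℝ,
      (∀ i, 0 < (P i).eval 0) ∧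
      (∀ τ ∈ Set.Icc (0 : ℝ) Tmax, ∀ i,
        (-(fun j => ((P j).derivative.eval τ)) + A τ *ᵥ (fun j => (P j).eval τ)
          + Ec τ *ᵥ (fun _ => (1:ℝ))) i < 0) ∧
      (∀ τ ∈ Set.Icc (0 : ℝ) Tmax, ∀ i,
        (Cc τ *ᵥ (fun j => (P j).eval τ) + Fc τ *ᵥ (fun _ => (1:ℝ))) i - γ < 0) ∧
      (∀ θ ∈ Set.Icc Tmin Tmax, ∀ i,
        (J *ᵥ (fun j => (P j).eval θ) - (fun j => (P j).eval 0)
          + Ed *ᵥ (fun _ => (1:ℝ))) i < 0) ∧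
      (∀ θ ∈ Set.Icc Tmin Tmax, ∀ i,
        (Cd *ᵥ (fun j => (P j).eval θ) + Fd *ᵥ (fun _ => (1:ℝ))) i - γ < 0)) := by
  have hTmax : (0:ℝ) < Tmax := lt_of_lt_of_le hT hTT
  constructor
  · -- forward: smooth certificate → polynomial certificate
    rintro ⟨ζ, ζ', hderiv, hζ'c, hpos, hc1, hc2, hc3, hc4⟩
    set K : Set ℝ := Set.Icc (0:ℝ) Tmax with hK
    set K2 : Set ℝ := Set.Icc Tmin Tmax with hK2
    have hKc : IsCompact K := isCompact_Icc
    have hK2c : IsCompact K2 := isCompact_Icc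
    have hK2K : K2 ⊆ K := Set.Icc_subset_Icc (le_of_lt hT) le_rfl
    have hζc : ContinuousOn ζ K := fun x hx => (hderiv x hx).continuousWithinAt
    have hζci : ∀ i, ContinuousOn (fun x => ζ x i) K :=
      fun i => (continuous_apply i).comp_continuousOn hζc
    have hζ'ci : ∀ i, ContinuousOn (fun x => ζ' x i) K :=
      fun i => (continuous_apply i).comp_continuousOn hζ'c
    have hAij : ∀ i j, ContinuousOn (fun x => A x i j) K :=
      fun i j => (continuous_id.matrix_elem i j).comp_continuousOn hA
    have hCcij : ∀ i j, ContinuousOn (fun x => Cc x i j) K :=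
      fun i j => (continuous_id.matrix_elem i j).comp_continuousOn hCc
    -- margins
    obtain ⟨ε1, hε1pos, hε1⟩ := aux_neg_margin hKc
      (g := fun x i => (-(ζ' x) + A x *ᵥ ζ x + Ec x *ᵥ (fun _ => (1:ℝ))) i)
      (fun i => by
        have : (fun x => (-(ζ' x) + A x *ᵥ ζ x + Ec x *ᵥ (fun _ => (1:ℝ))) i)
            = fun x => -(ζ' x i) + (∑ j, A x i j * ζ x j)
              + ∑ j, Ec x i j * 1 := by
          funext x
          simp [Matrix.mulVec, dotProduct]
        rw [this]
        refine (((hζ'ci i).neg.add ?_).add ?_)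
        · exact continuousOn_finset_sum _ fun j _ => (hAij i j).mul (hζci j)
        · exact continuousOn_finset_sum _ fun j _ =>
            (((continuous_id.matrix_elem i j).comp_continuousOn hEc)).mul continuousOn_const)
      hc1
    obtain ⟨ε2, hε2pos, hε2⟩ := aux_neg_margin hKc
      (g := fun x i => (Cc x *ᵥ ζ x + Fc x *ᵥ (fun _ => (1:ℝ))) i - γ)
      (fun i => by
        have : (fun x => (Cc x *ᵥ ζ x + Fc x *ᵥ (fun _ => (1:ℝ))) i - γ)
            = fun x => ((∑ j, Cc x i j * ζ x j) + ∑ j, Fc x i j * 1) - γ := by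
          funext x
          simp [Matrix.mulVec, dotProduct]
        rw [this]
        refine (ContinuousOn.add ?_ ?_).sub continuousOn_const
        · exact continuousOn_finset_sum _ fun j _ => (hCcij i j).mul (hζci j)
        · exact continuousOn_finset_sum _ fun j _ =>
            (((continuous_id.matrix_elem i j).comp_continuousOn hFc)).mul continuousOn_const)
      hc2
    obtain ⟨ε3, hε3pos, hε3⟩ := aux_neg_margin hK2c
      (g := fun x i => (J *ᵥ ζ x - ζ 0 + Ed *ᵥ (fun _ => (1:ℝ))) i)
      (fun i => by
        have : (fun x => (J *ᵥ ζ x - ζ 0 + Ed *ᵥ (fun _ => (1:ℝ))) i)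
            = fun x => ((∑ j, J i j * ζ x j) - ζ 0 i) + ∑ j, Ed i j * 1 := by
          funext x
          simp [Matrix.mulVec, dotProduct]
        rw [this]
        refine ((ContinuousOn.sub ?_ continuousOn_const).add continuousOn_const)
        exact continuousOn_finset_sum _ fun j _ =>
          continuousOn_const.mul ((hζci j).mono hK2K))
      hc3
    obtain ⟨ε4, hε4pos, hε4⟩ := aux_neg_margin hK2c
      (g := fun x i => (Cd *ᵥ ζ x + Fd *ᵥ (fun _ => (1:ℝ))) i - γ)
      (fun i => by
        have : (fun x => (Cd *ᵥ ζ x + Fd *ᵥ (fun _ => (1:ℝ))) i - γ)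
            = fun x => ((∑ j, Cd i j * ζ x j) + ∑ j, Fd i j * 1) - γ := by
          funext x
          simp [Matrix.mulVec, dotProduct]
        rw [this]
        refine (ContinuousOn.add ?_ continuousOn_const).sub continuousOn_const
        exact continuousOn_finset_sum _ fun j _ =>
          continuousOn_const.mul ((hζci j).mono hK2K))
      hc4
    set ε : ℝ := min (min ε1 ε2) (min ε3 ε4) with hε
    have hεpos : 0 < ε := lt_min (lt_min hε1pos hε2pos) (lt_min hε3pos hε4pos)
    have hεle1 : ε ≤ ε1 := le_trans (min_le_left _ _) (min_le_left _ _)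
    have hεle2 : ε ≤ ε2 := le_trans (min_le_left _ _) (min_le_right _ _)
    have hεle3 : ε ≤ ε3 := le_trans (min_le_right _ _) (min_le_left _ _)
    have hεle4 : ε ≤ ε4 := le_trans (min_le_right _ _) (min_le_right _ _)
    -- bounds on matrix entries
    obtain ⟨MA, hMApos, hMA⟩ := aux_bound hKc (g := fun x (p : Fin n × Fin n) => A x p.1 p.2)
      (fun p => hAij p.1 p.2)
    obtain ⟨MC, hMCpos, hMC⟩ := aux_bound hKc (g := fun x (p : Fin qc × Fin n) => Cc x p.1 p.2)
      (fun p => hCcij p.1 p.2)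
    obtain ⟨MJ, hMJpos, hMJ⟩ := aux_bound hKc (g := fun _x (p : Fin n × Fin n) => J p.1 p.2)
      (fun p => continuousOn_const)
    obtain ⟨MD, hMDpos, hMD⟩ := aux_bound hKc (g := fun _x (p : Fin qd × Fin n) => Cd p.1 p.2)
      (fun p => continuousOn_const)
    set B : ℝ := 1 + Tmax * ((n:ℝ) * MA) + Tmax * ((n:ℝ) * MC) + Tmax * ((n:ℝ) * MJ)
      + Tmax * ((n:ℝ) * MD) with hB
    have hBpos : 0 < B := by
      have h1 : 0 ≤ Tmax * ((n:ℝ) * MA) := by positivity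
      have h2 : 0 ≤ Tmax * ((n:ℝ) * MC) := by positivity
      have h3 : 0 ≤ Tmax * ((n:ℝ) * MJ) := by positivity
      have h4 : 0 ≤ Tmax * ((n:ℝ) * MD) := by positivity
      rw [hB]; linarith
    set δ : ℝ := ε / (2 * B) with hδ
    have hδpos : 0 < δ := by positivity
    have hδB : δ * B = ε / 2 := by
      rw [hδ]; field_simp
    -- Weierstrass approximation of ζ'
    have hq : ∀ i : Fin n, ∃ q : Polynomial ℝ,
        ∀ x ∈ Set.Icc (0:ℝ) Tmax, |q.eval x - ζ' x i| < δ :=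
      fun i => exists_polynomial_near_of_continuousOn 0 Tmax _ (hζ'ci i) δ hδpos
    choose q hq using hq
    -- the polynomial certificate
    set P : Fin n → Polynomial ℝ := fun i => Polynomial.C (ζ 0 i) + pAntideriv (q i) with hP
    have hPder : ∀ i, (P i).derivative = q i := by
      intro i
      rw [hP]
      simp [pAntideriv_derivative]
    have hP0 : ∀ i, (P i).eval 0 = ζ 0 i := by
      intro i
      simp [hP, pAntideriv_eval_zero]
    have hzeroK : (0:ℝ) ∈ K := Set.left_mem_Icc.mpr (le_of_lt hTmax)
    -- closeness of P to ζ
    set e : ℝ := Tmax * δ with he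
    have hepos : 0 < e := by positivity
    have hPe : ∀ τ ∈ K, ∀ j, |(P j).eval τ - ζ τ j| ≤ e := by
      intro τ hτ j
      have hd : ∀ x ∈ K, HasDerivWithinAt (fun x => (P j).eval x - ζ x j)
          ((q j).eval x - ζ' x j) K x := by
        intro x hx
        have h1 : HasDerivWithinAt (fun x => (P j).eval x) ((P j).derivative.eval x) K x :=
          ((P j).hasDerivAt x).hasDerivWithinAt
        have h2 : HasDerivWithinAt (fun x => ζ x j) (ζ' x j) K x :=
          hasDerivWithinAt_pi.mp (hderiv x hx) j
        have := h1.sub h2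
        rwa [hPder j] at this
      have hbound : ∀ x ∈ K, ‖(q j).eval x - ζ' x j‖ ≤ δ := by
        intro x hx
        exact le_of_lt (by simpa [Real.norm_eq_abs] using hq j x hx)
      have := (convex_Icc (0:ℝ) Tmax).norm_image_sub_le_of_norm_hasDerivWithin_le
        hd hbound hτ hzeroK
      have h0 : (P j).eval 0 - ζ 0 j = 0 := by rw [hP0 j]; ring
      have hτabs : ‖τ - 0‖ ≤ Tmax := by
        rw [sub_zero, Real.norm_eq_abs, abs_of_nonneg hτ.1]
        exact hτ.2
      calc |(P j).eval τ - ζ τ j| ≤ δ * ‖τ - 0‖ := by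
            simpa [Real.norm_eq_abs, h0, abs_sub_comm] using this
      _ ≤ δ * Tmax := mul_le_mul_of_nonneg_left hτabs (le_of_lt hδpos)
      _ = e := by rw [he]; ring
    refine ⟨P, ?_, ?_, ?_, ?_, ?_⟩
    · intro i; rw [hP0 i]; exact hpos i
    · -- condition 1
      intro τ hτ i
      have hm := hε1 τ hτ i
      have hq1 := abs_le.mp (le_of_lt (hq i τ hτ))
      have hsum := abs_le.mp (aux_sum_diff_bound (fun j => A τ i j)
        (fun j => (P j).eval τ) (fun j => ζ τ j) MA e
        (fun j => hMA τ hτ (i, j)) (fun j => hPe τ hτ j))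
      have hkey : δ + (n:ℝ) * MA * e ≤ ε / 2 := by
        have h1 : δ + (n:ℝ) * MA * e = δ * (1 + Tmax * ((n:ℝ) * MA)) := by rw [he]; ring
        have h2 : δ * (1 + Tmax * ((n:ℝ) * MA)) ≤ δ * B := by
          have h3 : 0 ≤ Tmax * ((n:ℝ) * MC) := by positivity
          have h4 : 0 ≤ Tmax * ((n:ℝ) * MJ) := by positivity
          have h5 : 0 ≤ Tmax * ((n:ℝ) * MD) := by positivity
          have : 1 + Tmax * ((n:ℝ) * MA) ≤ B := by rw [hB]; linarith
          exact mul_le_mul_of_nonneg_left this (le_of_lt hδpos)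
        rw [h1]; rw [hδB] at h2; exact h2
      have hgoal : (-(fun j => ((P j).derivative.eval τ)) + A τ *ᵥ (fun j => (P j).eval τ)
          + Ec τ *ᵥ (fun _ => (1:ℝ))) i
          = -((q i).eval τ) + (∑ j, A τ i j * (P j).eval τ)
            + ∑ j, Ec τ i j * 1 := by
        simp [Matrix.mulVec, dotProduct, hPder]
      have hmexp : (-(ζ' τ) + A τ *ᵥ ζ τ + Ec τ *ᵥ (fun _ => (1:ℝ))) i
          = -(ζ' τ i) + (∑ j, A τ i j * ζ τ j) + ∑ j, Ec τ i j * 1 := by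
        simp [Matrix.mulVec, dotProduct]
      rw [hgoal]
      rw [hmexp] at hm
      have hεle := hεle1
      linarith [hq1.1, hq1.2, hsum.1, hsum.2]
    · -- condition 2
      intro τ hτ i
      have hm := hε2 τ hτ i
      have hsum := abs_le.mp (aux_sum_diff_bound (fun j => Cc τ i j)
        (fun j => (P j).eval τ) (fun j => ζ τ j) MC e
        (fun j => hMC τ hτ (i, j)) (fun j => hPe τ hτ j))
      have hkey : (n:ℝ) * MC * e ≤ ε / 2 := by
        have h1 : (n:ℝ) * MC * e = δ * (Tmax * ((n:ℝ) * MC)) := by rw [he]; ring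
        have h2 : δ * (Tmax * ((n:ℝ) * MC)) ≤ δ * B := by
          have h3 : 0 ≤ Tmax * ((n:ℝ) * MA) := by positivity
          have h4 : 0 ≤ Tmax * ((n:ℝ) * MJ) := by positivity
          have h5 : 0 ≤ Tmax * ((n:ℝ) * MD) := by positivity
          have : Tmax * ((n:ℝ) * MC) ≤ B := by rw [hB]; linarith
          exact mul_le_mul_of_nonneg_left this (le_of_lt hδpos)
        rw [h1]; rw [hδB] at h2; exact h2
      have hgoal : (Cc τ *ᵥ (fun j => (P j).eval τ) + Fc τ *ᵥ (fun _ => (1:ℝ))) i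
          = (∑ j, Cc τ i j * (P j).eval τ) + ∑ j, Fc τ i j * 1 := by
        simp [Matrix.mulVec, dotProduct]
      have hmexp : (Cc τ *ᵥ ζ τ + Fc τ *ᵥ (fun _ => (1:ℝ))) i
          = (∑ j, Cc τ i j * ζ τ j) + ∑ j, Fc τ i j * 1 := by
        simp [Matrix.mulVec, dotProduct]
      rw [hgoal]
      rw [hmexp] at hm
      have hεle := hεle2
      linarith [hsum.1, hsum.2]
    · -- condition 3
      intro θ hθ i
      have hm := hε3 θ hθ i
      have hθK : θ ∈ K := hK2K hθ
      have hsum := abs_le.mp (aux_sum_diff_bound (fun j => J i j)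
        (fun j => (P j).eval θ) (fun j => ζ θ j) MJ e
        (fun j => hMJ 0 hzeroK (i, j)) (fun j => hPe θ hθK j))
      have hkey : (n:ℝ) * MJ * e ≤ ε / 2 := by
        have h1 : (n:ℝ) * MJ * e = δ * (Tmax * ((n:ℝ) * MJ)) := by rw [he]; ring
        have h2 : δ * (Tmax * ((n:ℝ) * MJ)) ≤ δ * B := by
          have h3 : 0 ≤ Tmax * ((n:ℝ) * MA) := by positivity
          have h4 : 0 ≤ Tmax * ((n:ℝ) * MC) := by positivity
          have h5 : 0 ≤ Tmax * ((n:ℝ) * MD) := by positivity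
          have : Tmax * ((n:ℝ) * MJ) ≤ B := by rw [hB]; linarith
          exact mul_le_mul_of_nonneg_left this (le_of_lt hδpos)
        rw [h1]; rw [hδB] at h2; exact h2
      have hgoal : (J *ᵥ (fun j => (P j).eval θ) - (fun j => (P j).eval 0)
          + Ed *ᵥ (fun _ => (1:ℝ))) i
          = ((∑ j, J i j * (P j).eval θ) - ζ 0 i) + ∑ j, Ed i j * 1 := by
        simp [Matrix.mulVec, dotProduct, hP0]
      have hmexp : (J *ᵥ ζ θ - ζ 0 + Ed *ᵥ (fun _ => (1:ℝ))) i
          = ((∑ j, J i j * ζ θ j) - ζ 0 i) + ∑ j, Ed i j * 1 := by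
        simp [Matrix.mulVec, dotProduct]
      rw [hgoal]
      rw [hmexp] at hm
      have hεle := hεle3
      linarith [hsum.1, hsum.2]
    · -- condition 4
      intro θ hθ i
      have hm := hε4 θ hθ i
      have hθK : θ ∈ K := hK2K hθ
      have hsum := abs_le.mp (aux_sum_diff_bound (fun j => Cd i j)
        (fun j => (P j).eval θ) (fun j => ζ θ j) MD e
        (fun j => hMD 0 hzeroK (i, j)) (fun j => hPe θ hθK j))
      have hkey : (n:ℝ) * MD * e ≤ ε / 2 := by
        have h1 : (n:ℝ) * MD * e = δ * (Tmax * ((n:ℝ) * MD)) := by rw [he]; ring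
        have h2 : δ * (Tmax * ((n:ℝ) * MD)) ≤ δ * B := by
          have h3 : 0 ≤ Tmax * ((n:ℝ) * MA) := by positivity
          have h4 : 0 ≤ Tmax * ((n:ℝ) * MC) := by positivity
          have h5 : 0 ≤ Tmax * ((n:ℝ) * MJ) := by positivity
          have : Tmax * ((n:ℝ) * MD) ≤ B := by rw [hB]; linarith
          exact mul_le_mul_of_nonneg_left this (le_of_lt hδpos)
        rw [h1]; rw [hδB] at h2; exact h2
      have hgoal : (Cd *ᵥ (fun j => (P j).eval θ) + Fd *ᵥ (fun _ => (1:ℝ))) i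
          = (∑ j, Cd i j * (P j).eval θ) + ∑ j, Fd i j * 1 := by
        simp [Matrix.mulVec, dotProduct]
      have hmexp : (Cd *ᵥ ζ θ + Fd *ᵥ (fun _ => (1:ℝ))) i
          = (∑ j, Cd i j * ζ θ j) + ∑ j, Fd i j * 1 := by
        simp [Matrix.mulVec, dotProduct]
      rw [hgoal]
      rw [hmexp] at hm
      have hεle := hεle4
      linarith [hsum.1, hsum.2]
  · -- backward: polynomial certificate → smooth certificate
    rintro ⟨P, hpos, hc1, hc2, hc3, hc4⟩
    refine ⟨fun τ j => (P j).eval τ, fun τ j => (P j).derivative.eval τ,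
      fun τ _ => hasDerivWithinAt_pi.mpr fun j => ((P j).hasDerivAt τ).hasDerivWithinAt,
      Continuous.continuousOn (continuous_pi fun j => (P j).derivative.continuous_aeval), ?_, ?_, ?_, ?_, ?_⟩
    · exact hpos
    · exact hc1
    · exact hc2
    · exact hc3
    · exact hc4
end
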